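/- arXiv:0906.4316 — 10 statements merged into one kernel-verified Lean document; each statement's English description precedes it below -/
import Mathlib

section
/- A binary relation ⪰ on a set C satisfies cancellation if and only if ⪰ is reflexive and transitive. -/
/-!
Read the pairs `(aᵢ, bᵢ)`, `i < n`, as `R`-edges of a multigraph on `C`. Equality of the
multisets says that adding the edge `aₙ → bₙ` makes the multigraph balanced (in-degree equals
out-degree at every vertex), so a walk along the edges starting at `bₙ` can only get stuck at
`aₙ`; reflexivity and transitivity turn that walk into `R bₙ aₙ`. Conversely, cancellation for
`n = 1` is reflexivity, and for `⟨a, b, c⟩`, `⟨b, c, a⟩` it is transitivity.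
-/

/-- A binary relation `R` on a set `C` satisfies *cancellation*: for all pairs of
sequences `⟨a_1, …, a_n⟩`, `⟨b_1, …, b_n⟩` (n ≥ 1) of elements of `C` forming equal
multisets, if `a_i ⪰ b_i` for all `i ≤ n - 1`, then `b_n ⪰ a_n`. -/
def Cancellation {α : Type*} (C : Set α) (R : α → α → Prop) : Prop :=
  ∀ (n : ℕ) (a b : Fin (n + 1) → α),
    (∀ i, a i ∈ C) → (∀ i, b i ∈ C) →
    ((List.ofFn a : Multiset α) = (List.ofFn b : Multiset α)) →
    (∀ i : Fin (n + 1), (i : ℕ) < n → R (a i) (b i)) →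
    R (b (Fin.last n)) (a (Fin.last n))

section

open Relation

variable {α : Type*}

theorem reflTransGen_of_cons_map_fst_eq_cons_map_snd {r : α → α → Prop} {x y : α}
    (P : Multiset (α × α)) (hP : ∀ p ∈ P, r p.1 p.2)
    (h : x ::ₘ P.map Prod.fst = y ::ₘ P.map Prod.snd) : ReflTransGen r y x := by
  induction P using Multiset.strongInductionOn generalizing y with
  | _ P ih =>
    by_cases hyx : y = x
    · exact hyx ▸ .refl
    have hy : y ∈ P.map Prod.fst :=
      (Multiset.mem_cons.1 (h ▸ Multiset.mem_cons_self y _)).resolve_left hyx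
    obtain ⟨p, hp, rfl⟩ := Multiset.mem_map.1 hy
    obtain ⟨Q, rfl⟩ := Multiset.exists_cons_of_mem hp
    have hQ : x ::ₘ Q.map Prod.fst = p.2 ::ₘ Q.map Prod.snd := by
      rw [Multiset.map_cons, Multiset.map_cons, Multiset.cons_swap] at h
      exact (Multiset.cons_inj_right _).1 h
    exact .head (hP p (Multiset.mem_cons_self _ _)) <|
      ih Q (Multiset.lt_cons_self _ _) (fun q hq => hP q (Multiset.mem_cons_of_mem hq)) hQ

theorem rel_of_reflTransGen_restrict {C : Set α} {R : α → α → Prop}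
    (hrefl : ∀ a ∈ C, R a a) (htrans : ∀ a ∈ C, ∀ b ∈ C, ∀ c ∈ C, R a b → R b c → R a c)
    {a b : α} (ha : a ∈ C) (h : ReflTransGen (fun x y => x ∈ C ∧ y ∈ C ∧ R x y) a b) :
    R a b := by
  induction h with
  | refl => exact hrefl a ha
  | tail _ hbc ih =>
    obtain ⟨hb, hc, hbc⟩ := hbc
    exact htrans _ ha _ hb _ hc ih hbc

theorem Multiset.coe_ofFn_succ {n : ℕ} (f : Fin (n + 1) → α) :
    (List.ofFn f : Multiset α) = f (Fin.last n) ::ₘ ↑(List.ofFn fun i => f i.castSucc) := by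
  rw [List.ofFn_succ', List.concat_eq_append, ← Multiset.coe_add, add_comm]
  rfl

namespace Cancellation

variable {C : Set α} {R : α → α → Prop}

theorem refl (h : Cancellation C R) {a : α} (ha : a ∈ C) : R a a :=
  h 0 (fun _ => a) (fun _ => a) (fun _ => ha) (fun _ => ha) rfl fun _ hi => absurd hi (by simp)

theorem trans (h : Cancellation C R) {a b c : α} (ha : a ∈ C) (hb : b ∈ C) (hc : c ∈ C)
    (hab : R a b) (hbc : R b c) : R a c := by
  refine h 2 ![a, b, c] ![b, c, a] ?_ ?_ ?_ ?_
  · simp [Fin.forall_fin_succ, ha, hb, hc]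
  · simp [Fin.forall_fin_succ, ha, hb, hc]
  · exact Multiset.coe_eq_coe.2 ([a, b, c].rotate_perm 1).symm
  · simp [Fin.forall_fin_succ, hab, hbc]

theorem of_refl_of_trans (hrefl : ∀ a ∈ C, R a a)
    (htrans : ∀ a ∈ C, ∀ b ∈ C, ∀ c ∈ C, R a b → R b c → R a c) : Cancellation C R := by
  intro n a b ha hb hab hR
  refine rel_of_reflTransGen_restrict hrefl htrans (hb _) <|
    reflTransGen_of_cons_map_fst_eq_cons_map_snd
      (List.ofFn fun i : Fin n => (a i.castSucc, b i.castSucc)) ?_ ?_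
  · simpa [List.mem_ofFn] using fun i => ⟨ha _, hb _, hR _ (by simp)⟩
  · rw [Multiset.coe_ofFn_succ a, Multiset.coe_ofFn_succ b] at hab
    simpa only [Multiset.map_coe, List.map_ofFn, Function.comp_def] using hab

end Cancellation

end

/-- Cancellation holds iff the relation is reflexive and transitive on `C`. -/
theorem cancellation_iff_refl_and_trans {α : Type*} (C : Set α) (R : α → α → Prop) :
    Cancellation C R ↔
      ((∀ a ∈ C, R a a) ∧
       (∀ a ∈ C, ∀ b ∈ C, ∀ c ∈ C, R a b → R b c → R a c)) :=
  ⟨fun h => ⟨fun _ => h.refl, fun _ ha _ hb _ hc => h.trans ha hb hc⟩,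
    fun ⟨hrefl, htrans⟩ => .of_refl_of_trans hrefl htrans⟩
end

section
/- If a preference relation ⪰ on a set C of Savage acts satisfies statewise cancellation, then ⪰ satisfies event independence: for all acts a, b, c, c' : S → O and all subsets T ⊆ S such that the spliced acts a_T c, b_T c, a_T c', b_T c' all lie in C, if a_T c ⪰ b_T c then a_T c' ⪰ b_T c'. -/
/-- A binary relation `R` on a set `C` of Savage acts satisfies *statewise
cancellation*: for all pairs of sequences of elements of `C` whose multisets of
values agree at every state, if `a_i ⪰ b_i` for all `i ≤ n - 1`, then `b_n ⪰ a_n`. -/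
def StatewiseCancel {S O : Type*} (C : Set (S → O)) (R : (S → O) → (S → O) → Prop) : Prop :=
  ∀ (n : ℕ) (a b : Fin (n + 1) → S → O),
    (∀ i, a i ∈ C) → (∀ i, b i ∈ C) →
    (∀ s : S, ((List.ofFn fun i => a i s : List O) : Multiset O)
            = ((List.ofFn fun i => b i s : List O) : Multiset O)) →
    (∀ i : Fin (n + 1), (i : ℕ) < n → R (a i) (b i)) →
    R (b (Fin.last n)) (a (Fin.last n))

open Classical in
/-- The spliced act `a_T c`, which agrees with `a` on `T` and with `c` off `T`. -/
noncomputable def splice {S O : Type*} (T : Set S) (a c : S → O) : S → O :=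
  fun s => if s ∈ T then a s else c s

/-- Statewise cancellation implies event independence. -/
theorem statewiseCancel_implies_eventIndependence
    {S O : Type*} [Fintype S] [Fintype O] [Nonempty S] [Nonempty O]
    (C : Set (S → O)) (R : (S → O) → (S → O) → Prop)
    (hc : StatewiseCancel C R) :
    ∀ (a b c c' : S → O) (T : Set S),
      splice T a c ∈ C → splice T b c ∈ C →
      splice T a c' ∈ C → splice T b c' ∈ C →
      R (splice T a c) (splice T b c) → R (splice T a c') (splice T b c') := by
  intro a b c c' T h1 h2 h3 h4 hR
  have := hc 1 ![splice T a c, splice T b c'] ![splice T b c, splice T a c']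
    (by intro i; fin_cases i <;> simpa) (by intro i; fin_cases i <;> simpa)
    (by
      intro s
      simp only [List.ofFn_succ, List.ofFn_zero, Matrix.cons_val_zero,
        Matrix.cons_val_one, Matrix.head_cons, Fin.succ_zero_eq_one]
      by_cases hs : s ∈ T <;>
        simp [splice, hs, List.Perm.swap])
    (by
      intro i hi
      fin_cases i
      · simpa
      · simp at hi)
  simpa [Fin.last] using this
end

section
/- If a binary relation ⪰ on a set C of Savage acts is complete (for all a, b ∈ C, a ⪰ b or b ⪰ a), then ⪰ satisfies extended statewise cancellation if and only if ⪰ satisfies statewise cancellation. -/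
/-- Extended statewise cancellation for a relation on a set of Savage acts. -/
def ExtStatewiseCancel {S O : Type*} (C : Set (S → O)) (R : (S → O) → (S → O) → Prop) : Prop :=
  ∀ (n : ℕ) (a b : Fin (n + 1) → S → O),
    (∀ i, a i ∈ C) → (∀ i, b i ∈ C) →
    (∀ s : S, ((List.ofFn fun i => a i s : List O) : Multiset O)
            = ((List.ofFn fun i => b i s : List O) : Multiset O)) →
    (∃ k, k ≤ n ∧ (∀ i : Fin (n + 1), (i : ℕ) < k → R (a i) (b i)) ∧
      (∀ i : Fin (n + 1), k ≤ (i : ℕ) → a i = a (Fin.last n) ∧ b i = b (Fin.last n))) →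
    R (b (Fin.last n)) (a (Fin.last n))

/-! Statewise cancellation is the case `k = n` of the extended axiom. Conversely, given the
extended hypotheses, either `b_n ⪰ a_n` already holds, or by completeness `a_n ⪰ b_n`; then
`a_i ⪰ b_i` holds for every `i ≥ k` too, because `a_i = a_n` and `b_i = b_n` there, and plain
statewise cancellation yields `b_n ⪰ a_n`. -/

section

variable {S O : Type*} {C : Set (S → O)} {R : (S → O) → (S → O) → Prop}

theorem ExtStatewiseCancel.statewiseCancel (h : ExtStatewiseCancel C R) :
    StatewiseCancel C R := by
  intro n a b ha hb hmult hR
  refine h n a b ha hb hmult ⟨n, le_rfl, hR, fun i hi => ?_⟩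
  obtain rfl : i = Fin.last n := Fin.ext (le_antisymm (Fin.is_le i) hi)
  exact ⟨rfl, rfl⟩

theorem StatewiseCancel.extStatewiseCancel (h : StatewiseCancel C R)
    (hcomp : ∀ a ∈ C, ∀ b ∈ C, R a b ∨ R b a) : ExtStatewiseCancel C R := by
  rintro n a b ha hb hmult ⟨k, -, hRk, hconst⟩
  rcases hcomp _ (hb (Fin.last n)) _ (ha (Fin.last n)) with hba | hab
  · exact hba
  · refine h n a b ha hb hmult fun i _ => ?_
    by_cases hik : (i : ℕ) < k
    · exact hRk i hik
    · obtain ⟨hai, hbi⟩ := hconst i (not_lt.mp hik)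
      rwa [hai, hbi]

end

theorem extStatewiseCancel_iff_statewiseCancel_of_complete_general
    {S O : Type*}
    (C : Set (S → O)) (R : (S → O) → (S → O) → Prop)
    (hcomp : ∀ a ∈ C, ∀ b ∈ C, R a b ∨ R b a) :
    ExtStatewiseCancel C R ↔ StatewiseCancel C R :=
  ⟨ExtStatewiseCancel.statewiseCancel, fun h => h.extStatewiseCancel hcomp⟩

/-- For a complete relation, extended statewise cancellation is equivalent to
statewise cancellation. -/
theorem extStatewiseCancel_iff_statewiseCancel_of_complete
    {S O : Type*} [Fintype S] [Fintype O] [Nonempty S] [Nonempty O]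
    (C : Set (S → O)) (R : (S → O) → (S → O) → Prop)
    (hcomp : ∀ a ∈ C, ∀ b ∈ C, R a b ∨ R b a) :
    ExtStatewiseCancel C R ↔ StatewiseCancel C R :=
  extStatewiseCancel_iff_statewiseCancel_of_complete_general C R hcomp
end

section
/- A binary relation ⪰ on a convex subset C of ℝ^n satisfies extended mixture cancellation if and only if ⪰ is reflexive, transitive, and satisfies rational mixture independence. -/
/-- Extended mixture cancellation for a relation on a subset of a real vector space. -/
def ExtMixCancel {V : Type*} [AddCommGroup V] [Module ℝ V]
    (C : Set V) (R : V → V → Prop) : Prop :=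
  ∀ (n : ℕ) (a b : Fin (n + 1) → V),
    (∀ i, a i ∈ C) → (∀ i, b i ∈ C) →
    (∑ i, a i = ∑ i, b i) →
    (∃ k, k ≤ n ∧ (∀ i : Fin (n + 1), (i : ℕ) < k → R (a i) (b i)) ∧
      (∀ i : Fin (n + 1), k ≤ (i : ℕ) → a i = a (Fin.last n) ∧ b i = b (Fin.last n))) →
    R (b (Fin.last n)) (a (Fin.last n))

/-- Rational mixture independence: for every rational `r ∈ (0, 1]`,
`a ⪰ b` iff `r•a + (1-r)•c ⪰ r•b + (1-r)•c`. -/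
def RatMixIndep {V : Type*} [AddCommGroup V] [Module ℝ V]
    (C : Set V) (R : V → V → Prop) : Prop :=
  ∀ a ∈ C, ∀ b ∈ C, ∀ c ∈ C, ∀ r : ℚ, 0 < r → r ≤ 1 →
    (R a b ↔ R ((r : ℝ) • a + (1 - (r : ℝ)) • c) ((r : ℝ) • b + (1 - (r : ℝ)) • c))

/-!
On a convex set, rational mixture independence is equivalent to two-block cancellation:
`p • x + q • u = p • y + q • v` with `p, q > 0` and `x ⪰ y` give `v ⪰ u`. Mixing with the weight
`p / (p + q)` turns a two-block identity into two instances of mixture independence, and a weight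
`r = p / q` turns an instance of mixture independence into a two-block identity.
Extended mixture cancellation contains two-block cancellation, reflexivity and transitivity as
special cases. For the converse, transitivity and mixture independence let the relations
`aᵢ ⪰ bᵢ`, `i < k`, be averaged to `ā ⪰ b̄`, and the sum identity becomes the two-block identity
`k • ā + (n + 1 - k) • aₙ = k • b̄ + (n + 1 - k) • bₙ`.
-/

open Finset

theorem Fin.sum_eq_sum_Iio_add_nsmul {M : Type*} [AddCommMonoid M] {N : ℕ} (f : Fin N → M)
    (K : Fin N) (c : M) (hf : ∀ i, K ≤ i → f i = c) :
    ∑ i, f i = ∑ i ∈ Iio K, f i + (N - K) • c := by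
  rw [← sum_filter_add_sum_filter_not univ (· < K)]
  have hlt : univ.filter (· < K) = Iio K := by ext; simp
  have hge : univ.filter (fun i => ¬ i < K) = Ici K := by ext; simp
  rw [hlt, hge, sum_congr rfl (fun i hi => hf i (mem_Ici.1 hi)), Finset.sum_const, Fin.card_Ici]

theorem Fin.sum_ite_lt {M : Type*} [AddCommMonoid M] {N : ℕ} (K : Fin N) (x u : M) :
    ∑ i : Fin N, (if i < K then x else u) = (K : ℕ) • x + (N - K) • u := by
  rw [Fin.sum_eq_sum_Iio_add_nsmul _ K u (fun i hi => if_neg (not_lt.2 hi)),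
    sum_congr rfl (fun i hi => if_pos (mem_Iio.1 hi)), Finset.sum_const, Fin.card_Iio]

variable {V : Type*} [AddCommGroup V] [Module ℝ V] {C : Set V} {R : V → V → Prop}

theorem Convex.inv_card_smul_sum_mem (hC : Convex ℝ C) {ι : Type*} {s : Finset ι}
    (hs : s.Nonempty) {z : ι → V} (hz : ∀ i ∈ s, z i ∈ C) :
    (#s : ℝ)⁻¹ • ∑ i ∈ s, z i ∈ C := by
  rw [smul_sum]
  refine hC.sum_mem (fun _ _ => by positivity) ?_ hz
  rw [Finset.sum_const, nsmul_eq_mul, mul_inv_cancel₀ (by exact_mod_cast hs.card_pos.ne')]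

def TwoBlockCancel (C : Set V) (R : V → V → Prop) : Prop :=
  ∀ x ∈ C, ∀ y ∈ C, ∀ u ∈ C, ∀ v ∈ C, ∀ p q : ℕ, 0 < p → 0 < q →
    p • x + q • u = p • y + q • v → R x y → R v u

namespace ExtMixCancel

theorem refl (h : ExtMixCancel C R) : ∀ a ∈ C, R a a := fun a ha =>
  h 0 (fun _ => a) (fun _ => a) (fun _ => ha) (fun _ => ha) rfl
    ⟨0, le_rfl, fun _ hi => absurd hi (Nat.not_lt_zero _), fun _ _ => ⟨rfl, rfl⟩⟩

theorem trans (h : ExtMixCancel C R) :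
    ∀ a ∈ C, ∀ b ∈ C, ∀ c ∈ C, R a b → R b c → R a c := by
  intro a ha b hb c hc hab hbc
  have hR : ∀ i : Fin 3, (i : ℕ) < 2 → R (![a, b, c] i) (![b, c, a] i) := by
    intro i hi
    fin_cases i
    exacts [hab, hbc, absurd hi (by decide)]
  have hlast : ∀ i : Fin 3, 2 ≤ (i : ℕ) → ![a, b, c] i = c ∧ ![b, c, a] i = a := by
    intro i hi
    fin_cases i
    exacts [absurd hi (by decide), absurd hi (by decide), ⟨rfl, rfl⟩]
  exact h 2 ![a, b, c] ![b, c, a] (fun i => by fin_cases i <;> assumption)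
    (fun i => by fin_cases i <;> assumption) (by simp [Fin.sum_univ_three]; abel)
    ⟨2, le_rfl, hR, hlast⟩

theorem twoBlockCancel (h : ExtMixCancel C R) : TwoBlockCancel C R := by
  intro x hx y hy u hu v hv p q hp hq hsum hxy
  obtain ⟨q, rfl⟩ := Nat.exists_eq_add_one.2 hq
  set K : Fin (p + q + 1) := ⟨p, by omega⟩
  have hlast : ¬ Fin.last (p + q) < K := by simp [K, Fin.lt_def]
  have hblocks := h (p + q) (fun i => if i < K then x else u) (fun i => if i < K then y else v)
    (fun i => by split <;> assumption) (fun i => by split <;> assumption)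
    (by simpa only [Fin.sum_ite_lt, K, show p + q + 1 - p = q + 1 by omega] using hsum)
    ⟨p, by omega, fun i hi => by simpa [K, Fin.lt_def, hi] using hxy,
      fun i hi => by simp [K, Fin.lt_def, not_lt.2 hi, hlast]⟩
  simpa only [hlast, if_false] using hblocks

end ExtMixCancel

theorem TwoBlockCancel.ratMixIndep (hC : Convex ℝ C) (h : TwoBlockCancel C R) :
    RatMixIndep C R := by
  intro a ha b hb c hc r hr0 hr1
  obtain ⟨p, hp⟩ := Int.eq_ofNat_of_zero_le (Rat.num_nonneg.2 hr0.le)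
  have hp0 : 0 < p := by have := Rat.num_pos.2 hr0; omega
  have hpr : (r.den : ℝ) * r = p := by
    have := Rat.mul_den_eq_num r
    rw [hp, mul_comm] at this
    exact_mod_cast this
  have hr0' : (0 : ℝ) ≤ r := by exact_mod_cast hr0.le
  have hr1' : (r : ℝ) ≤ 1 := by exact_mod_cast hr1
  have hmix : ∀ {z}, z ∈ C → (r : ℝ) • z + (1 - (r : ℝ)) • c ∈ C := fun hz =>
    hC hz hc hr0' (by linarith) (by ring)
  have hblocks : p • a + r.den • ((r : ℝ) • b + (1 - (r : ℝ)) • c) =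
      p • b + r.den • ((r : ℝ) • a + (1 - (r : ℝ)) • c) := by
    simp only [← Nat.cast_smul_eq_nsmul ℝ]
    linear_combination (norm := module) hpr • (b - a)
  constructor
  · exact h a ha b hb _ (hmix hb) _ (hmix ha) p r.den hp0 r.pos hblocks
  · exact h _ (hmix ha) _ (hmix hb) b hb a ha r.den p r.pos hp0
      (by rw [add_comm, ← hblocks, add_comm])

theorem RatMixIndep.twoBlockCancel (h : RatMixIndep C R) : TwoBlockCancel C R := by
  intro x hx y hy u hu v hv p q hp hq hsum hxy
  have hsum' : (p : ℝ) • x + (q : ℝ) • u = (p : ℝ) • y + (q : ℝ) • v := by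
    simpa only [← Nat.cast_smul_eq_nsmul ℝ] using hsum
  have hmixed := (h x hx y hy u hu (p / (p + q)) (by positivity)
    (div_le_one_of_le₀ (by simp) (by positivity))).1 hxy
  refine (h v hv u hu y hy (q / (p + q)) (by positivity)
    (div_le_one_of_le₀ (by simp) (by positivity))).2 ?_
  have hwp : 1 - (p : ℝ) / (p + q) = q / (p + q) := by field_simp; ring
  have hwq : 1 - (q : ℝ) / (p + q) = p / (p + q) := by field_simp; ring
  convert hmixed using 1 <;> push_cast <;> rw [hwp, hwq]
  · linear_combination (norm := module) -(p + q : ℝ)⁻¹ • hsum'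
  · exact add_comm _ _

namespace RatMixIndep

variable (hC : Convex ℝ C) (hind : RatMixIndep C R)
  (htrans : ∀ a ∈ C, ∀ b ∈ C, ∀ c ∈ C, R a b → R b c → R a c)
include hC hind htrans

theorem rel_mix {x y x' y' : V} (hx : x ∈ C) (hy : y ∈ C) (hx' : x' ∈ C) (hy' : y' ∈ C)
    {r : ℚ} (hr0 : 0 < r) (hr1 : r < 1) (h : R x y) (h' : R x' y') :
    R ((r : ℝ) • x + (1 - (r : ℝ)) • x') ((r : ℝ) • y + (1 - (r : ℝ)) • y') := by
  have hr0' : (0 : ℝ) ≤ r := by exact_mod_cast hr0.le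
  have hr1' : (r : ℝ) ≤ 1 := by exact_mod_cast hr1.le
  have hmix : ∀ {z z'}, z ∈ C → z' ∈ C → (r : ℝ) • z + (1 - (r : ℝ)) • z' ∈ C :=
    fun hz hz' => hC hz hz' hr0' (by linarith) (by ring)
  have hfirst := (hind x hx y hy x' hx' r hr0 hr1.le).1 h
  have hsecond := (hind x' hx' y' hy' y hy (1 - r) (by linarith) (by linarith)).1 h'
  rw [Rat.cast_sub, Rat.cast_one, sub_sub_cancel, add_comm _ ((r : ℝ) • y),
    add_comm _ ((r : ℝ) • y)] at hsecond
  exact htrans _ (hmix hx hx') _ (hmix hy hx') _ (hmix hy hy') hfirst hsecond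

theorem rel_average {ι : Type*} {s : Finset ι} (hs : s.Nonempty) {x y : ι → V}
    (hx : ∀ i ∈ s, x i ∈ C) (hy : ∀ i ∈ s, y i ∈ C) (h : ∀ i ∈ s, R (x i) (y i)) :
    R ((#s : ℝ)⁻¹ • ∑ i ∈ s, x i) ((#s : ℝ)⁻¹ • ∑ i ∈ s, y i) := by
  induction hs using Finset.Nonempty.cons_induction with
  | singleton i => simpa using h i (mem_singleton_self i)
  | cons i s hi hs ih =>
    simp only [mem_cons, forall_eq_or_imp] at hx hy h
    have hr1 : (1 : ℚ) / (#s + 1) < 1 := by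
      rw [div_lt_one (by positivity)]
      exact_mod_cast Nat.lt_add_of_pos_left hs.card_pos
    have hsplit : ∀ z : ι → V, (#(cons i s hi) : ℝ)⁻¹ • ∑ j ∈ cons i s hi, z j =
        (((1 : ℚ) / (#s + 1) : ℚ) : ℝ) • z i +
          (1 - (((1 : ℚ) / (#s + 1) : ℚ) : ℝ)) • ((#s : ℝ)⁻¹ • ∑ j ∈ s, z j) := by
      intro z
      rw [sum_cons, card_cons]
      push_cast
      match_scalars
      · field_simp
      · field_simp
        ring
    rw [hsplit, hsplit]
    exact rel_mix hC hind htrans hx.1 hy.1 (hC.inv_card_smul_sum_mem hs hx.2)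
      (hC.inv_card_smul_sum_mem hs hy.2) (by positivity) hr1 h.1 (ih hx.2 hy.2 h.2)

end RatMixIndep

theorem extMixCancel_of_refl_trans_ratMixIndep (hC : Convex ℝ C) (hrefl : ∀ a ∈ C, R a a)
    (htrans : ∀ a ∈ C, ∀ b ∈ C, ∀ c ∈ C, R a b → R b c → R a c) (hind : RatMixIndep C R) :
    ExtMixCancel C R := by
  rintro n a b ha hb hsum ⟨k, hkn, hR, htail⟩
  set K : Fin (n + 1) := ⟨k, by omega⟩
  rw [Fin.sum_eq_sum_Iio_add_nsmul a K _ (fun i hi => (htail i hi).1),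
    Fin.sum_eq_sum_Iio_add_nsmul b K _ (fun i hi => (htail i hi).2)] at hsum
  rcases k.eq_zero_or_pos with rfl | hk
  · have hK : Iio K = ∅ := by ext i; simp [K]
    simp only [hK, sum_empty, zero_add, ← Nat.cast_smul_eq_nsmul ℝ] at hsum
    rw [smul_right_injective V (Nat.cast_ne_zero.2 (by simp [K])) hsum]
    exact hrefl _ (hb _)
  · have hs : (Iio K).Nonempty := ⟨0, by simp [K, Fin.lt_def, hk]⟩
    have hcard : #(Iio K) = k := Fin.card_Iio K
    have hmean := hind.rel_average hC htrans hs (fun i _ => ha i) (fun i _ => hb i)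
      (fun i hi => hR i (Fin.lt_def.1 (Finset.mem_Iio.1 hi)))
    refine hind.twoBlockCancel _ (hC.inv_card_smul_sum_mem hs (fun i _ => ha i))
      _ (hC.inv_card_smul_sum_mem hs (fun i _ => hb i)) _ (ha _) _ (hb _) k (n + 1 - k)
      hk (by omega) ?_ hmean
    have hk' : (k : ℝ) ≠ 0 := Nat.cast_ne_zero.2 hk.ne'
    simpa only [hcard, ← Nat.cast_smul_eq_nsmul ℝ, smul_inv_smul₀ hk'] using hsum

/-- A relation on a convex subset of `ℝ^n` satisfies extended mixture cancellation
iff it is reflexive, transitive, and satisfies rational mixture independence. -/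
theorem extMixCancel_iff_refl_trans_ratMixIndep
    {n : ℕ} (C : Set (Fin n → ℝ)) (R : (Fin n → ℝ) → (Fin n → ℝ) → Prop)
    (hC : Convex ℝ C) :
    ExtMixCancel C R ↔
      ((∀ a ∈ C, R a a) ∧
       (∀ a ∈ C, ∀ b ∈ C, ∀ c ∈ C, R a b → R b c → R a c) ∧
       RatMixIndep C R) :=
  ⟨fun h => ⟨h.refl, h.trans, h.twoBlockCancel.ratMixIndep hC⟩,
    fun ⟨hrefl, htrans, hind⟩ => extMixCancel_of_refl_trans_ratMixIndep hC hrefl htrans hind⟩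
end

section
/- If a binary relation ⪰ on a convex subset C of ℝ^n satisfies extended mixture cancellation and has closed graph, then ⪰ satisfies (full) mixture independence: for all a, b, c ∈ C and every real r ∈ (0,1], a ⪰ b if and only if r·a + (1−r)·c ⪰ r·b + (1−r)·c. -/
/-- The graph `{(a, b) ∈ C × C : a ⪰ b}` is closed. -/
def ClosedGraphOn {V : Type*} [TopologicalSpace V] (C : Set V) (R : V → V → Prop) : Prop :=
  IsClosed {p : V × V | p.1 ∈ C ∧ p.2 ∈ C ∧ R p.1 p.2}

/-!
For a rational weight `r = p / q`, extended mixture cancellation applied to `p` copies of the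
pair `(a, b)` and `q` copies of the mixed pair gives mixture independence at `r`, because
`p • a + q • (r • b + (1 - r) • c) = p • b + q • (r • a + (1 - r) • c)`, and symmetrically with
the roles of the blocks exchanged. Closedness of the graph carries the forward implication from
the rational weights to all of `[0, 1]`. For the converse at a real `r`, mix once more with weight
`s / r` for a rational `0 < s < r`: this lands on the rational weight `s`.
-/

open Set

theorem Fin.sum_ite_val_lt {M : Type*} [AddCommMonoid M] (k t : ℕ) (x u : M) :
    ∑ i : Fin (k + t), (if (i : ℕ) < k then x else u) = k • x + t • u := by
  simp [Fin.sum_univ_add]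

theorem smul_smul_add_one_sub_smul_add {V : Type*} [AddCommGroup V] [Module ℝ V]
    (t r : ℝ) (a c : V) :
    t • (r • a + (1 - r) • c) + (1 - t) • c = (t * r) • a + (1 - t * r) • c := by
  match_scalars <;> ring

theorem Convex.smul_add_one_sub_smul_mem {V : Type*} [AddCommGroup V] [Module ℝ V]
    {C : Set V} (hC : Convex ℝ C) {a c : V} (ha : a ∈ C) (hc : c ∈ C) {r : ℝ}
    (hr0 : 0 ≤ r) (hr1 : r ≤ 1) : r • a + (1 - r) • c ∈ C :=
  hC ha hc hr0 (by linarith) (by ring)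

namespace ExtMixCancel

variable {V : Type*} [AddCommGroup V] [Module ℝ V] {C : Set V} {R : V → V → Prop}

theorem rel_of_nsmul_add_nsmul_eq (hcancel : ExtMixCancel C R) {x y u v : V}
    (hx : x ∈ C) (hy : y ∈ C) (hu : u ∈ C) (hv : v ∈ C) {k t : ℕ} (ht : 0 < t)
    (hsum : k • x + t • u = k • y + t • v) (hxy : R x y) : R v u := by
  obtain ⟨t, rfl⟩ : ∃ t', t = t' + 1 := ⟨t - 1, by omega⟩
  have hlast : ¬ ((Fin.last (k + t) : ℕ) < k) := by simp
  have := hcancel (k + t) (fun i => if (i : ℕ) < k then x else u)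
    (fun i => if (i : ℕ) < k then y else v)
    (fun i => by split <;> assumption) (fun i => by split <;> assumption)
    ((Fin.sum_ite_val_lt k (t + 1) x u).trans <|
      hsum.trans (Fin.sum_ite_val_lt k (t + 1) y v).symm)
    ⟨k, by omega, fun i hi => by simpa [hi] using hxy,
      fun i hi => by simp [show ¬ (i : ℕ) < k by omega]⟩
  simpa [hlast] using this

variable {a b c : V}

theorem rel_iff_rel_mix_of_eq_div (hcancel : ExtMixCancel C R) (hC : Convex ℝ C)
    (ha : a ∈ C) (hb : b ∈ C) (hc : c ∈ C) {p q : ℕ} (hp : 0 < p) (hpq : p ≤ q) :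
    R a b ↔ R (((p : ℝ) / q) • a + (1 - (p : ℝ) / q) • c)
      (((p : ℝ) / q) • b + (1 - (p : ℝ) / q) • c) := by
  have hq : 0 < q := hp.trans_le hpq
  have hr0 : 0 ≤ (p : ℝ) / q := by positivity
  have hr1 : (p : ℝ) / q ≤ 1 := div_le_one_of_le₀ (by exact_mod_cast hpq) (by positivity)
  have hma := hC.smul_add_one_sub_smul_mem ha hc hr0 hr1
  have hmb := hC.smul_add_one_sub_smul_mem hb hc hr0 hr1
  constructor
  · refine hcancel.rel_of_nsmul_add_nsmul_eq (k := p) ha hb hmb hma hq ?_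
    simp only [← Nat.cast_smul_eq_nsmul ℝ]
    match_scalars <;> field_simp
  · refine hcancel.rel_of_nsmul_add_nsmul_eq (k := q) hma hmb hb ha hp ?_
    simp only [← Nat.cast_smul_eq_nsmul ℝ]
    match_scalars <;> field_simp

theorem rel_iff_rel_mix_of_rat (hcancel : ExtMixCancel C R) (hC : Convex ℝ C)
    (ha : a ∈ C) (hb : b ∈ C) (hc : c ∈ C) {s : ℚ} (hs0 : 0 < s) (hs1 : s ≤ 1) :
    R a b ↔ R ((s : ℝ) • a + (1 - s : ℝ) • c) ((s : ℝ) • b + (1 - s : ℝ) • c) := by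
  obtain ⟨p, hp⟩ := Int.eq_ofNat_of_zero_le (Rat.num_nonneg.2 hs0.le)
  have hs : (s : ℝ) = p / s.den := by rw [Rat.cast_def, hp, Int.cast_natCast]
  rw [hs]
  refine hcancel.rel_iff_rel_mix_of_eq_div hC ha hb hc ?_ ?_
  · exact_mod_cast hp ▸ Rat.num_pos.2 hs0
  · exact_mod_cast hp ▸ Rat.num_le_denom_iff.2 hs1

variable [TopologicalSpace V] [ContinuousAdd V] [ContinuousSMul ℝ V]

theorem rel_mix_of_rel (hcancel : ExtMixCancel C R) (hC : Convex ℝ C)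
    (hclosed : ClosedGraphOn C R) (ha : a ∈ C) (hb : b ∈ C) (hc : c ∈ C) (hab : R a b)
    {r : ℝ} (hr : r ∈ Icc 0 1) :
    R (r • a + (1 - r) • c) (r • b + (1 - r) • c) := by
  set T := {s : ℝ | (s • a + (1 - s) • c, s • b + (1 - s) • c) ∈
    {p : V × V | p.1 ∈ C ∧ p.2 ∈ C ∧ R p.1 p.2}}
  have hT : IsClosed T := hclosed.preimage (by fun_prop)
  have hrat : Ioo 0 1 ∩ range ((↑) : ℚ → ℝ) ⊆ T := by
    rintro _ ⟨⟨hs0, hs1⟩, s, rfl⟩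
    exact ⟨hC.smul_add_one_sub_smul_mem ha hc hs0.le hs1.le,
      hC.smul_add_one_sub_smul_mem hb hc hs0.le hs1.le,
      (hcancel.rel_iff_rel_mix_of_rat hC ha hb hc (by exact_mod_cast hs0)
        (by exact_mod_cast hs1.le)).1 hab⟩
  have hIcc : Icc 0 1 ⊆ T := by
    rw [← closure_Ioo zero_ne_one, hT.closure_subset_iff]
    exact (Rat.denseRange_cast.open_subset_closure_inter isOpen_Ioo).trans
      (hT.closure_subset_iff.2 hrat)
  exact (hIcc hr).2.2

theorem rel_of_rel_mix (hcancel : ExtMixCancel C R) (hC : Convex ℝ C)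
    (hclosed : ClosedGraphOn C R) (ha : a ∈ C) (hb : b ∈ C) (hc : c ∈ C)
    {r : ℝ} (hr0 : 0 < r) (hr1 : r ≤ 1) (h : R (r • a + (1 - r) • c) (r • b + (1 - r) • c)) :
    R a b := by
  obtain ⟨s, hs0, hsr⟩ := exists_rat_btwn hr0
  have hs := hcancel.rel_mix_of_rel hC hclosed (hC.smul_add_one_sub_smul_mem ha hc hr0.le hr1)
    (hC.smul_add_one_sub_smul_mem hb hc hr0.le hr1) hc h
    ⟨(div_pos hs0 hr0).le, (div_le_one hr0).2 hsr.le⟩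
  rw [smul_smul_add_one_sub_smul_add, smul_smul_add_one_sub_smul_add,
    div_mul_cancel₀ _ hr0.ne'] at hs
  exact (hcancel.rel_iff_rel_mix_of_rat hC ha hb hc (by exact_mod_cast hs0)
    (by exact_mod_cast (hsr.trans_le hr1).le)).2 hs

end ExtMixCancel

/-- Extended mixture cancellation together with a closed graph implies full
(real) mixture independence. -/
theorem mixtureIndependence_of_extMixCancel_closedGraph
    {n : ℕ} (C : Set (Fin n → ℝ)) (R : (Fin n → ℝ) → (Fin n → ℝ) → Prop)
    (hC : Convex ℝ C) (hcancel : ExtMixCancel C R) (hclosed : ClosedGraphOn C R) :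
    ∀ a ∈ C, ∀ b ∈ C, ∀ c ∈ C, ∀ r : ℝ, 0 < r → r ≤ 1 →
      (R a b ↔ R (r • a + (1 - r) • c) (r • b + (1 - r) • c)) :=
  fun _ ha _ hb _ hc _ hr0 hr1 =>
    ⟨fun h => hcancel.rel_mix_of_rel hC hclosed ha hb hc h ⟨hr0.le, hr1⟩,
      hcancel.rel_of_rel_mix hC hclosed ha hb hc hr0 hr1⟩
end

section
/- If a binary relation ⪰ on a convex subset C of ℝ^n is complete (for all a, b ∈ C, a ⪰ b or b ⪰ a), has closed graph, and satisfies extended mixture cancellation, then ⪰ satisfies the Archimedean property: for all a, b, c ∈ C with a ≻ b ≻ c, there exist r, r' ∈ (0,1) such that a ≻ r·a + (1−r)·c ≻ b ≻ r'·a + (1−r')·c ≻ c. -/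
/-- Strict preference: `a ≻ b` iff `a ⪰ b` and not `b ⪰ a`. -/
def StrictPref {V : Type*} (R : V → V → Prop) (a b : V) : Prop :=
  R a b ∧ ¬ R b a

/-!
Extended mixture cancellation with two or three summands already makes `⪰` transitive on `C`
and forces `x ≻ (x + y)/2 ≻ y` whenever `x ≻ y`. Completeness and the closed graph give, by
connectedness of `[0, 1]`, a mixture `d = t • a + (1 - t) • c` indifferent to `b`, with
`0 < t < 1` since `a ≻ b ≻ c`. The midpoints of `a, d` and of `d, c` are again mixtures of `a`
and `c`, and they lie strictly between `a` and `b`, respectively `b` and `c`.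
-/

namespace ExtMixCancel

variable {V : Type*} [AddCommGroup V] [Module ℝ V] {C : Set V} {R : V → V → Prop}

theorem trans_s5 (hcancel : ExtMixCancel C R) {x y z : V} (hx : x ∈ C) (hy : y ∈ C) (hz : z ∈ C)
    (hxy : R x y) (hyz : R y z) : R x z := by
  have := hcancel 2 ![x, y, z] ![y, z, x]
    (by intro i; fin_cases i <;> assumption)
    (by intro i; fin_cases i <;> assumption)
    (by simp [Fin.sum_univ_three]; abel)
    ⟨2, le_rfl, by intro i hi; fin_cases i <;> simp_all,
      by intro i hi; fin_cases i <;> simp_all [Fin.last]⟩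
  simpa [Fin.last] using this

theorem of_add_eq_add (hcancel : ExtMixCancel C R) {x y w z : V} (hx : x ∈ C) (hy : y ∈ C)
    (hw : w ∈ C) (hz : z ∈ C) (hsum : x + z = y + w) (hxy : R x y) : R w z := by
  have := hcancel 1 ![x, z] ![y, w]
    (by intro i; fin_cases i <;> assumption)
    (by intro i; fin_cases i <;> assumption)
    (by simp [Fin.sum_univ_two, hsum])
    ⟨1, le_rfl, by intro i hi; fin_cases i <;> simp_all,
      by intro i hi; fin_cases i <;> simp_all [Fin.last]⟩
  simpa [Fin.last] using this

theorem of_add_add_add_eq (hcancel : ExtMixCancel C R) {x y u v : V} (hx : x ∈ C)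
    (hy : y ∈ C) (hu : u ∈ C) (hv : v ∈ C) (hsum : x + v + v = y + u + u) (hxy : R x y) :
    R u v := by
  have := hcancel 2 ![x, v, v] ![y, u, u]
    (by intro i; fin_cases i <;> assumption)
    (by intro i; fin_cases i <;> assumption)
    (by simpa [Fin.sum_univ_three] using hsum)
    ⟨1, by norm_num, by intro i hi; fin_cases i <;> simp_all,
      by intro i hi; fin_cases i <;> simp_all [Fin.last]⟩
  simpa [Fin.last] using this

theorem strictPref_of_strictPref_of_pref (hcancel : ExtMixCancel C R) {x y z : V} (hx : x ∈ C)
    (hy : y ∈ C) (hz : z ∈ C) (hxy : StrictPref R x y) (hyz : R y z) : StrictPref R x z :=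
  ⟨hcancel.trans_s5 hx hy hz hxy.1 hyz, fun hzx => hxy.2 (hcancel.trans_s5 hy hz hx hyz hzx)⟩

theorem strictPref_of_pref_of_strictPref (hcancel : ExtMixCancel C R) {x y z : V} (hx : x ∈ C)
    (hy : y ∈ C) (hz : z ∈ C) (hxy : R x y) (hyz : StrictPref R y z) : StrictPref R x z :=
  ⟨hcancel.trans_s5 hx hy hz hxy hyz.1, fun hzx => hyz.2 (hcancel.trans_s5 hz hx hy hzx hxy)⟩

theorem strictPref_midpoint (hcancel : ExtMixCancel C R) (hC : Convex ℝ C) {x y : V}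
    (hx : x ∈ C) (hy : y ∈ C) (hxy : StrictPref R x y) :
    StrictPref R x ((1 / 2 : ℝ) • x + (1 / 2 : ℝ) • y) ∧
      StrictPref R ((1 / 2 : ℝ) • x + (1 / 2 : ℝ) • y) y := by
  set m := (1 / 2 : ℝ) • x + (1 / 2 : ℝ) • y with hm_def
  have hm : m ∈ C := hC hx hy (by norm_num) (by norm_num) (by norm_num)
  refine ⟨⟨?_, fun hmx => ?_⟩, ⟨?_, fun hym => ?_⟩⟩
  · exact hcancel.of_add_add_add_eq hx hy hx hm (by rw [hm_def]; module) hxy.1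
  · have hym : R y m := hcancel.of_add_eq_add hm hx hy hm (by rw [hm_def]; module) hmx
    exact hxy.2 (hcancel.trans_s5 hy hm hx hym hmx)
  · exact hcancel.of_add_add_add_eq hx hy hm hy (by rw [hm_def]; module) hxy.1
  · have hmx : R m x := hcancel.of_add_eq_add hy hm hm hx (by rw [hm_def]; module) hym
    exact hxy.2 (hcancel.trans_s5 hy hm hx hym hmx)

end ExtMixCancel

theorem ClosedGraphOn.exists_indifferent_mix {V : Type*} [AddCommGroup V] [Module ℝ V]
    [TopologicalSpace V] [ContinuousAdd V] [ContinuousSMul ℝ V] {C : Set V} {R : V → V → Prop}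
    (hclosed : ClosedGraphOn C R) (hC : Convex ℝ C) (hcomp : ∀ a ∈ C, ∀ b ∈ C, R a b ∨ R b a)
    {a b c : V} (ha : a ∈ C) (hb : b ∈ C) (hc : c ∈ C) (hab : R a b) (hbc : R b c) :
    ∃ t ∈ Set.Icc (0 : ℝ) 1,
      R (t • a + (1 - t) • c) b ∧ R b (t • a + (1 - t) • c) := by
  set f : ℝ → V := fun t => t • a + (1 - t) • c
  have hfC : ∀ t ∈ Set.Icc (0 : ℝ) 1, f t ∈ C := fun t ht =>
    hC ha hc ht.1 (by linarith [ht.2]) (by ring)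
  have hf : Continuous f := by fun_prop
  obtain ⟨t, ht, ⟨-, -, hfb⟩, ⟨-, -, hbf⟩⟩ := isPreconnected_closed_iff.mp isPreconnected_Icc
    _ _ (hclosed.preimage (hf.prodMk continuous_const))
    (hclosed.preimage (continuous_const.prodMk hf))
    (fun t ht => (hcomp _ (hfC t ht) _ hb).imp
      (fun h => ⟨hfC t ht, hb, h⟩) (fun h => ⟨hb, hfC t ht, h⟩))
    ⟨1, ⟨zero_le_one, le_rfl⟩, by simpa [f] using ⟨ha, hb, hab⟩⟩
    ⟨0, ⟨le_rfl, zero_le_one⟩, by simpa [f] using ⟨hb, hc, hbc⟩⟩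
  exact ⟨t, ht, hfb, hbf⟩

/-- A complete relation with closed graph satisfying extended mixture cancellation
satisfies the Archimedean property. -/
theorem archimedean_of_complete_closedGraph_extMixCancel
    {n : ℕ} (C : Set (Fin n → ℝ)) (R : (Fin n → ℝ) → (Fin n → ℝ) → Prop)
    (hC : Convex ℝ C)
    (hcomp : ∀ a ∈ C, ∀ b ∈ C, R a b ∨ R b a)
    (hclosed : ClosedGraphOn C R)
    (hcancel : ExtMixCancel C R) :
    ∀ a ∈ C, ∀ b ∈ C, ∀ c ∈ C,
      StrictPref R a b → StrictPref R b c →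
      ∃ r ∈ Set.Ioo (0 : ℝ) 1, ∃ r' ∈ Set.Ioo (0 : ℝ) 1,
        StrictPref R a (r • a + (1 - r) • c) ∧
        StrictPref R (r • a + (1 - r) • c) b ∧
        StrictPref R b (r' • a + (1 - r') • c) ∧
        StrictPref R (r' • a + (1 - r') • c) c := by
  intro a ha b hb c hc hab hbc
  obtain ⟨t, ht, hdb, hbd⟩ := hclosed.exists_indifferent_mix hC hcomp ha hb hc hab.1 hbc.1
  set d := t • a + (1 - t) • c with hd_def
  have hd : d ∈ C := hC ha hc ht.1 (by linarith [ht.2]) (by ring)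
  have ht0 : 0 < t := ht.1.lt_of_ne (by rintro rfl; exact hbc.2 (by simpa [d] using hdb))
  have ht1 : t < 1 := ht.2.lt_of_ne (by rintro rfl; exact hab.2 (by simpa [d] using hbd))
  obtain ⟨ham, hmd⟩ := hcancel.strictPref_midpoint hC ha hd
    (hcancel.strictPref_of_strictPref_of_pref ha hb hd hab hbd)
  obtain ⟨hdm, hmc⟩ := hcancel.strictPref_midpoint hC hd hc
    (hcancel.strictPref_of_pref_of_strictPref hd hb hc hdb hbc)
  have hm₁ : ((1 + t) / 2) • a + (1 - (1 + t) / 2) • c = (1 / 2 : ℝ) • a + (1 / 2 : ℝ) • d := by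
    rw [hd_def]; module
  have hm₂ : (t / 2) • a + (1 - t / 2) • c = (1 / 2 : ℝ) • d + (1 / 2 : ℝ) • c := by
    rw [hd_def]; module
  refine ⟨(1 + t) / 2, ⟨by linarith, by linarith⟩, t / 2, ⟨by linarith, by linarith⟩,
    ?_, ?_, ?_, ?_⟩ <;> simp only [hm₁, hm₂]
  · exact ham
  · exact hcancel.strictPref_of_strictPref_of_pref (hC ha hd (by norm_num) (by norm_num)
      (by norm_num)) hd hb hmd hdb
  · exact hcancel.strictPref_of_pref_of_strictPref hb hd (hC hd hc (by norm_num) (by norm_num)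
      (by norm_num)) hbd hdm
  · exact hmc
end

section
/- A binary relation ⪰ on a closed, mixture-closed set C of Anscombe–Aumann acts satisfies extended mixture cancellation and has closed graph if and only if there exists a set U of functions u : S × O → ℝ such that for all a, b ∈ C: a ⪰ b if and only if ∑_{s∈S} ∑_{o∈O} u(s,o)·a(s)(o) ≥ ∑_{s∈S} ∑_{o∈O} u(s,o)·b(s)(o) for every u ∈ U. -/
/-!
Let `D` be the set of differences `a - b` with `a ⪰ b`. Extended mixture cancellation makes
`a ⪰ b` depend only on `a - b`; together with the closed graph it lets one mix and rescale
preference pairs by real weights, so `D` is convex and, for `a, b ∈ C`, `a ⪰ b` iff `a - b` lies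
in the cone `K` generated by `D`. As `C` is compact, `D` is compact; since the symmetric convex set
`C - C` contains a ball of its span around `0`, `K` coincides with `D` near `0`, so `K` is closed.
Farkas' lemma then cuts out `K` by the linear functionals nonnegative on it, and every linear
functional on `ℝ^(S × O)` is `x ↦ ∑ s, ∑ o, u s o * x s o`. Conversely, a representation by
linear functionals has closed graph, and it satisfies extended mixture cancellation because
summing the utility differences over the two sequences gives zero.
-/

/-- An Anscombe–Aumann act: a map assigning to each state a probability vector over outcomes. -/
def IsAAAct {S O : Type*} [Fintype O] (a : S → O → ℝ) : Prop :=
  ∀ s, (∀ o, 0 ≤ a s o) ∧ (∑ o, a s o = 1)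

open Set Filter Topology Pointwise

theorem Convex.smul_add_one_sub_smul_mem_s6 {V : Type*} [AddCommGroup V] [Module ℝ V] {C : Set V}
    (hC : Convex ℝ C) {x y : V} (hx : x ∈ C) (hy : y ∈ C) {θ : ℝ} (h0 : 0 ≤ θ) (h1 : θ ≤ 1) :
    θ • x + (1 - θ) • y ∈ C :=
  hC hx hy h0 (sub_nonneg.2 h1) (add_sub_cancel θ 1)

theorem Convex.exists_pos_forall_mem_span_norm_lt_mem {E : Type*} [NormedAddCommGroup E]
    [NormedSpace ℝ E] [FiniteDimensional ℝ E] {Γ : Set E} (hΓ : Convex ℝ Γ)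
    (hneg : ∀ x ∈ Γ, -x ∈ Γ) (h0 : (0 : E) ∈ Γ) :
    ∃ r > 0, ∀ w ∈ Submodule.span ℝ Γ, ‖w‖ < r → w ∈ Γ := by
  set W := Submodule.span ℝ Γ
  set Γ' : Set W := (↑) ⁻¹' Γ
  have hΓ' : Convex ℝ Γ' := hΓ.linear_preimage W.subtype
  have hspan : affineSpan ℝ Γ' = ⊤ := by
    rw [AffineSubspace.affineSpan_eq_top_iff_vectorSpan_eq_top_of_nonempty ℝ W W ⟨0, h0⟩,
      vectorSpan_eq_span_vsub_set_right ℝ (show (0 : W) ∈ Γ' from h0)]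
    simp only [vsub_eq_sub, sub_zero, image_id']
    exact Submodule.span_span_coe_preimage
  obtain ⟨p, hp⟩ := hΓ'.interior_nonempty_iff_affineSpan_eq_top.2 hspan
  have hnp : -p ∈ interior Γ' := by
    have hsymm : Homeomorph.neg W ⁻¹' Γ' = Γ' :=
      ext fun x => ⟨fun hx => by simpa [Γ'] using hneg _ hx, fun hx => hneg _ hx⟩
    rw [← hsymm, ← Homeomorph.preimage_interior] at hp
    exact hp
  have h0int : (0 : W) ∈ interior Γ' := by
    simpa using hΓ'.interior hp hnp (by norm_num : (0 : ℝ) ≤ 1 / 2) (by norm_num : (0 : ℝ) ≤ 1 / 2)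
      (by norm_num)
  obtain ⟨r, hr, hball⟩ := Metric.mem_nhds_iff.1 (isOpen_interior.mem_nhds h0int)
  refine ⟨r, hr, fun w hw hwr => ?_⟩
  have : (⟨w, hw⟩ : W) ∈ Metric.ball 0 r := mem_ball_zero_iff.2 hwr
  exact interior_subset (s := Γ') (hball this)

theorem ConvexCone.isClosed_hull_of_forall_norm_lt_mem {E : Type*} [NormedAddCommGroup E]
    [NormedSpace ℝ E] {D : Set E} (hconv : Convex ℝ D) (hclosed : IsClosed D) {r : ℝ}
    (hr : 0 < r) (hsmall : ∀ w ∈ hull ℝ D, ‖w‖ < r → w ∈ D) :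
    IsClosed (hull ℝ D : Set E) := by
  refine isClosed_of_closure_subset fun w hw => ?_
  set μ := r / (‖w‖ + r)
  have hμ : 0 < μ := by positivity
  have hμw : μ • w ∈ Metric.ball 0 r ∩ closure (hull ℝ D) := by
    refine ⟨mem_ball_zero_iff.2 ?_, (hull ℝ D).closure.smul_mem hμ hw⟩
    rw [norm_smul, Real.norm_of_nonneg hμ.le, div_mul_eq_mul_div, div_lt_iff₀ (by positivity)]
    nlinarith [norm_nonneg w]
  have hμwD : μ • w ∈ D := hclosed.closure_subset_iff.2
    (fun v hv => hsmall v hv.2 (mem_ball_zero_iff.1 hv.1)) (Metric.isOpen_ball.inter_closure hμw)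
  rw [SetLike.mem_coe, mem_hull_of_convex hconv]
  exact ⟨μ⁻¹, inv_pos.2 hμ, μ • w, hμwD, inv_smul_smul₀ hμ.ne' w⟩

theorem Finset.sum_range_add_ite_lt {M : Type*} [AddCommMonoid M] (x : ℕ → M) (b : M) (k N : ℕ) :
    ∑ i ∈ Finset.range (k + N), (if i < k then x i else b) = ∑ i ∈ Finset.range k, x i + N • b := by
  rw [Finset.sum_range_add]
  congr 1
  · exact Finset.sum_congr rfl fun i hi => if_pos (Finset.mem_range.1 hi)
  · simp

section Preference

variable {V : Type*} [AddCommGroup V] {C : Set V} {R : V → V → Prop}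

variable (C R) in
def prefDiffs : Set V :=
  (fun p : V × V => p.1 - p.2) '' {p | p.1 ∈ C ∧ p.2 ∈ C ∧ R p.1 p.2}

theorem mem_prefDiffs {w : V} : w ∈ prefDiffs C R ↔ ∃ x ∈ C, ∃ y ∈ C, R x y ∧ x - y = w := by
  simp [prefDiffs, and_assoc]

theorem isClosed_prefDiffs [TopologicalSpace V] [IsTopologicalAddGroup V] [T2Space V]
    (hCc : IsCompact C) (hG : ClosedGraphOn C R) : IsClosed (prefDiffs C R) :=
  (((hCc.prod hCc).of_isClosed_subset hG fun _ hp => ⟨hp.1, hp.2.1⟩).image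
    (continuous_fst.sub continuous_snd)).isClosed

variable [Module ℝ V]

namespace ExtMixCancel

theorem refl_s6 (hE : ExtMixCancel C R) {a : V} (ha : a ∈ C) : R a a :=
  hE 0 (fun _ => a) (fun _ => a) (fun _ => ha) (fun _ => ha) rfl
    ⟨0, le_rfl, fun _ h => absurd h (Nat.not_lt_zero _), fun _ _ => ⟨rfl, rfl⟩⟩

theorem of_sum_add_nsmul (hE : ExtMixCancel C R) {k N : ℕ} (hN : 0 < N) {x y : ℕ → V}
    (hx : ∀ i < k, x i ∈ C) (hy : ∀ i < k, y i ∈ C) (hxy : ∀ i < k, R (x i) (y i)) {a b : V}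
    (ha : a ∈ C) (hb : b ∈ C)
    (hsum : ∑ i ∈ Finset.range k, x i + N • b = ∑ i ∈ Finset.range k, y i + N • a) : R a b := by
  obtain ⟨M, rfl⟩ := Nat.exists_eq_add_one_of_ne_zero hN.ne'
  have key := hE (k + M) (fun i => if (i : ℕ) < k then x i else b)
    (fun i => if (i : ℕ) < k then y i else a)
    (fun i => by split_ifs with h <;> simp_all) (fun i => by split_ifs with h <;> simp_all)
    (by rw [Fin.sum_univ_eq_sum_range (fun i => if i < k then x i else b),
      Fin.sum_univ_eq_sum_range (fun i => if i < k then y i else a), add_assoc,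
      Finset.sum_range_add_ite_lt, Finset.sum_range_add_ite_lt, hsum])
    ⟨k, by omega, fun i hi => by simpa [hi] using hxy i hi, fun i hi => by simp [hi.not_gt]⟩
  simpa using key

theorem mix_natCast_div (hE : ExtMixCancel C R) (hC : Convex ℝ C) {x₁ y₁ x₂ y₂ : V}
    (hx₁ : x₁ ∈ C) (hy₁ : y₁ ∈ C) (hx₂ : x₂ ∈ C) (hy₂ : y₂ ∈ C) (h₁ : R x₁ y₁) (h₂ : R x₂ y₂)
    {p m : ℕ} (hm : 0 < m) (hpm : p ≤ m) :
    R ((p / m : ℝ) • x₁ + (1 - p / m : ℝ) • x₂) ((p / m : ℝ) • y₁ + (1 - p / m : ℝ) • y₂) := by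
  have hθ0 : (0 : ℝ) ≤ p / m := by positivity
  have hθ1 : (p / m : ℝ) ≤ 1 := div_le_one_of_le₀ (by exact_mod_cast hpm) (Nat.cast_nonneg m)
  refine hE.of_sum_add_nsmul hm (k := m) (x := fun i => if i < p then x₁ else x₂)
    (y := fun i => if i < p then y₁ else y₂) (fun i _ => by split_ifs <;> assumption)
    (fun i _ => by split_ifs <;> assumption) (fun i _ => by split_ifs <;> assumption)
    (hC.smul_add_one_sub_smul_mem_s6 hx₁ hx₂ hθ0 hθ1) (hC.smul_add_one_sub_smul_mem_s6 hy₁ hy₂ hθ0 hθ1) ?_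
  obtain ⟨q, rfl⟩ := Nat.exists_eq_add_of_le hpm
  rw [Finset.sum_range_add_ite_lt, Finset.sum_range_add_ite_lt]
  simp only [Finset.sum_const, Finset.card_range, ← Nat.cast_smul_eq_nsmul ℝ, Nat.cast_add]
  have : (p : ℝ) + q ≠ 0 := by exact_mod_cast hm.ne'
  match_scalars <;> field_simp <;> ring

variable [TopologicalSpace V] [IsTopologicalAddGroup V] [ContinuousSMul ℝ V]

theorem mix (hE : ExtMixCancel C R) (hG : ClosedGraphOn C R) (hC : Convex ℝ C) {x₁ y₁ x₂ y₂ : V}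
    (hx₁ : x₁ ∈ C) (hy₁ : y₁ ∈ C) (hx₂ : x₂ ∈ C) (hy₂ : y₂ ∈ C) (h₁ : R x₁ y₁) (h₂ : R x₂ y₂)
    {θ : ℝ} (hθ0 : 0 ≤ θ) (hθ1 : θ ≤ 1) :
    R (θ • x₁ + (1 - θ) • x₂) (θ • y₁ + (1 - θ) • y₂) := by
  set θ' : ℕ → ℝ := fun k => ⌊θ * k⌋₊ / k
  have hθ' : Tendsto θ' atTop (𝓝 θ) :=
    (tendsto_nat_floor_mul_div_atTop hθ0).comp tendsto_natCast_atTop_atTop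
  have hcont : Continuous fun t : ℝ => (t • x₁ + (1 - t) • x₂, t • y₁ + (1 - t) • y₂) := by
    fun_prop
  refine (hG.mem_of_tendsto ((hcont.tendsto θ).comp hθ') ?_).2.2
  filter_upwards [eventually_gt_atTop 0] with k hk
  have hfloor : ⌊θ * k⌋₊ ≤ k :=
    Nat.floor_le_of_le (mul_le_of_le_one_left (Nat.cast_nonneg k) hθ1)
  have h0 : 0 ≤ θ' k := by positivity
  have h1 : θ' k ≤ 1 := div_le_one_of_le₀ (by exact_mod_cast hfloor) (Nat.cast_nonneg k)
  exact ⟨hC.smul_add_one_sub_smul_mem_s6 hx₁ hx₂ h0 h1, hC.smul_add_one_sub_smul_mem_s6 hy₁ hy₂ h0 h1,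
    hE.mix_natCast_div hC hx₁ hy₁ hx₂ hy₂ h₁ h₂ hk hfloor⟩

theorem convex_prefDiffs (hE : ExtMixCancel C R) (hG : ClosedGraphOn C R) (hC : Convex ℝ C) :
    Convex ℝ (prefDiffs C R) := by
  intro d₁ hd₁ d₂ hd₂ θ₁ θ₂ h₁ h₂ hθ
  obtain ⟨x₁, hx₁, y₁, hy₁, hR₁, rfl⟩ := mem_prefDiffs.1 hd₁
  obtain ⟨x₂, hx₂, y₂, hy₂, hR₂, rfl⟩ := mem_prefDiffs.1 hd₂
  obtain rfl : θ₂ = 1 - θ₁ := by linarith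
  refine mem_prefDiffs.2 ⟨_, hC.smul_add_one_sub_smul_mem_s6 hx₁ hx₂ h₁ (by linarith), _,
    hC.smul_add_one_sub_smul_mem_s6 hy₁ hy₂ h₁ (by linarith),
    hE.mix hG hC hx₁ hy₁ hx₂ hy₂ hR₁ hR₂ h₁ (by linarith), by module⟩

theorem of_sub_eq_smul (hE : ExtMixCancel C R) (hG : ClosedGraphOn C R) (hC : Convex ℝ C)
    {a b x y : V} (ha : a ∈ C) (hb : b ∈ C) (hx : x ∈ C) (hy : y ∈ C) (hxy : R x y) {t : ℝ}
    (ht : 0 ≤ t) (hab : a - b = t • (x - y)) : R a b := by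
  obtain ⟨N, hN⟩ := exists_nat_gt t
  have hN0 : (0 : ℝ) < N := ht.trans_lt hN
  have h0 : 0 ≤ t / N := by positivity
  have h1 : t / N ≤ 1 := div_le_one_of_le₀ hN.le hN0.le
  -- `z = (t/N) x + (1 - t/N) y ⪰ y`, and `N z + b = N y + a`
  have hzy := hE.mix hG hC hx hy hy hy hxy (hE.refl_s6 hy) h0 h1
  rw [← add_smul, add_sub_cancel, one_smul] at hzy
  refine hE.of_sum_add_nsmul (k := N) (N := 1) one_pos (x := fun _ => (t / N) • x + (1 - t / N) • y)
    (y := fun _ => y) (fun _ _ => hC.smul_add_one_sub_smul_mem_s6 hx hy h0 h1) (fun _ _ => hy)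
    (fun _ _ => hzy) ha hb ?_
  rw [sub_eq_iff_eq_add] at hab
  simp only [Finset.sum_const, Finset.card_range, ← Nat.cast_smul_eq_nsmul ℝ, hab]
  match_scalars <;> field_simp
  ring

theorem mem_hull_prefDiffs_iff (hE : ExtMixCancel C R) (hG : ClosedGraphOn C R) (hC : Convex ℝ C)
    {a b : V} (ha : a ∈ C) (hb : b ∈ C) :
    a - b ∈ ConvexCone.hull ℝ (prefDiffs C R) ↔ R a b := by
  refine ⟨fun h => ?_, fun h => ConvexCone.subset_hull (mem_prefDiffs.2 ⟨a, ha, b, hb, h, rfl⟩)⟩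
  obtain ⟨t, ht, d, hd, hab⟩ := (ConvexCone.mem_hull_of_convex (hE.convex_prefDiffs hG hC)).1 h
  obtain ⟨x, hx, y, hy, hxy, rfl⟩ := mem_prefDiffs.1 hd
  exact hE.of_sub_eq_smul hG hC ha hb hx hy hxy ht.le hab.symm

end ExtMixCancel

end Preference

section FiniteDimensional

variable {V : Type*} [NormedAddCommGroup V] [NormedSpace ℝ V] [FiniteDimensional ℝ V]
  {C : Set V} {R : V → V → Prop}

theorem ExtMixCancel.isClosed_hull_prefDiffs (hE : ExtMixCancel C R) (hG : ClosedGraphOn C R)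
    (hC : Convex ℝ C) (hCc : IsCompact C) :
    IsClosed (ConvexCone.hull ℝ (prefDiffs C R) : Set V) := by
  obtain rfl | ⟨c, hc⟩ := C.eq_empty_or_nonempty
  · have : ConvexCone.hull ℝ (∅ : Set V) = ⊥ := ConvexCone.gi.gc.l_bot
    simp [prefDiffs, this]
  obtain ⟨r, hr, hball⟩ := (hC.sub hC).exists_pos_forall_mem_span_norm_lt_mem
    (fun _ ⟨x, hx, y, hy, hxy⟩ => ⟨y, hy, x, hx, by rw [← hxy, neg_sub]⟩) ⟨c, hc, c, hc, sub_self c⟩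
  refine ConvexCone.isClosed_hull_of_forall_norm_lt_mem (hE.convex_prefDiffs hG hC)
    (isClosed_prefDiffs hCc hG) hr fun w hw hwr => ?_
  have hspan : w ∈ Submodule.span ℝ (C - C) :=
    ConvexCone.hull_min (C := (Submodule.span ℝ (C - C)).toConvexCone) (fun d hd => by
      obtain ⟨x, hx, y, hy, -, rfl⟩ := mem_prefDiffs.1 hd
      exact Submodule.subset_span (sub_mem_sub hx hy)) hw
  obtain ⟨a, ha, b, hb, rfl⟩ := hball w hspan hwr
  exact mem_prefDiffs.2 ⟨a, ha, b, hb, (hE.mem_hull_prefDiffs_iff hG hC ha hb).1 hw, rfl⟩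

theorem ExtMixCancel.iff_forall_linearMap_le (hE : ExtMixCancel C R) (hG : ClosedGraphOn C R)
    (hC : Convex ℝ C) (hCc : IsCompact C) {a b : V} (ha : a ∈ C) (hb : b ∈ C) :
    R a b ↔ ∀ f : V →ₗ[ℝ] ℝ, (∀ x ∈ C, ∀ y ∈ C, R x y → f y ≤ f x) → f b ≤ f a := by
  refine ⟨fun hab f hf => hf a ha b hb hab, fun h => ?_⟩
  by_contra hab
  let K : ProperCone ℝ V := ⟨(ConvexCone.hull ℝ (prefDiffs C R)).toPointedCone
    (ConvexCone.subset_hull (mem_prefDiffs.2 ⟨a, ha, a, ha, hE.refl_s6 ha, sub_self a⟩)),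
    hE.isClosed_hull_prefDiffs hG hC hCc⟩
  obtain ⟨f, hfK, hfab⟩ := K.hyperplane_separation_point (x₀ := a - b)
    ((hE.mem_hull_prefDiffs_iff hG hC ha hb).not.2 hab)
  refine (h f.toLinearMap fun x hx y hy hxy => ?_).not_gt ?_
  · have := hfK (x - y) ((hE.mem_hull_prefDiffs_iff hG hC hx hy).2 hxy)
    simpa [sub_nonneg] using this
  · simpa [sub_neg] using hfab

end FiniteDimensional

section Representation

variable {V ι : Type*} [AddCommGroup V] [Module ℝ V] {C : Set V} {R : V → V → Prop}

theorem extMixCancel_of_forall_le (φ : ι → V →ₗ[ℝ] ℝ)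
    (hR : ∀ a ∈ C, ∀ b ∈ C, R a b ↔ ∀ i, φ i b ≤ φ i a) : ExtMixCancel C R := by
  rintro n a b ha hb hsum ⟨k, -, hlt, hge⟩
  refine (hR _ (hb _) _ (ha _)).2 fun j => ?_
  by_contra! hlast
  have hpos : 0 < ∑ i, (φ j (a i) - φ j (b i)) := by
    refine Finset.sum_pos' (fun i _ => ?_) ⟨Fin.last n, Finset.mem_univ _, sub_pos.2 hlast⟩
    by_cases hi : (i : ℕ) < k
    · exact sub_nonneg.2 ((hR _ (ha i) _ (hb i)).1 (hlt i hi) j)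
    · rw [(hge i (not_lt.1 hi)).1, (hge i (not_lt.1 hi)).2]
      exact (sub_pos.2 hlast).le
  rw [Finset.sum_sub_distrib, ← map_sum, ← map_sum, hsum, sub_self] at hpos
  exact hpos.false

theorem closedGraphOn_of_forall_le [TopologicalSpace V] (hC : IsClosed C) (φ : ι → V →ₗ[ℝ] ℝ)
    (hφ : ∀ i, Continuous (φ i)) (hR : ∀ a ∈ C, ∀ b ∈ C, R a b ↔ ∀ i, φ i b ≤ φ i a) :
    ClosedGraphOn C R := by
  have hgraph : {p : V × V | p.1 ∈ C ∧ p.2 ∈ C ∧ R p.1 p.2} =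
      C ×ˢ C ∩ ⋂ i, {p | φ i p.2 ≤ φ i p.1} := by
    ext ⟨a, b⟩
    simp only [mem_ofPred_eq, mem_inter_iff, mem_prod, mem_iInter]
    exact ⟨fun ⟨ha, hb, hab⟩ => ⟨⟨ha, hb⟩, (hR a ha b hb).1 hab⟩,
      fun ⟨⟨ha, hb⟩, h⟩ => ⟨ha, hb, (hR a ha b hb).2 h⟩⟩
  rw [ClosedGraphOn, hgraph]
  exact (hC.prod hC).inter
    (isClosed_iInter fun i => isClosed_le ((hφ i).comp continuous_snd) ((hφ i).comp continuous_fst))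

end Representation

section AnscombeAumann

variable {S O : Type*} [Fintype S] [Fintype O]

theorem IsAAAct.norm_le_one {a : S → O → ℝ} (ha : IsAAAct a) : ‖a‖ ≤ 1 :=
  (pi_norm_le_iff_of_nonneg zero_le_one).2 fun s => (pi_norm_le_iff_of_nonneg zero_le_one).2
    fun o => by
      rw [Real.norm_of_nonneg ((ha s).1 o), ← (ha s).2]
      exact Finset.single_le_sum (fun o' _ => (ha s).1 o') (Finset.mem_univ o)

theorem isCompact_of_forall_isAAAct {C : Set (S → O → ℝ)} (hAA : ∀ a ∈ C, IsAAAct a)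
    (hC : IsClosed C) : IsCompact C :=
  Metric.isCompact_of_isClosed_isBounded hC
    (isBounded_iff_forall_norm_le.2 ⟨1, fun a ha => (hAA a ha).norm_le_one⟩)

def expectedUtility (u : S → O → ℝ) : (S → O → ℝ) →ₗ[ℝ] ℝ where
  toFun a := ∑ s, ∑ o, u s o * a s o
  map_add' a b := by simp only [Pi.add_apply, mul_add, Finset.sum_add_distrib]
  map_smul' c a := by
    simp only [Pi.smul_apply, smul_eq_mul, RingHom.id_apply, Finset.mul_sum, mul_left_comm]

theorem continuous_expectedUtility (u : S → O → ℝ) : Continuous (expectedUtility u) :=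
  show Continuous fun a : S → O → ℝ => ∑ s, ∑ o, u s o * a s o by fun_prop

theorem expectedUtility_surjective : Function.Surjective (expectedUtility (S := S) (O := O)) := by
  classical
  intro f
  refine ⟨fun s o => f (Pi.single s (Pi.single o 1)), LinearMap.ext fun a => ?_⟩
  have ha : a = ∑ s, ∑ o, a s o • Pi.single s (Pi.single o 1) := by
    ext s o
    simp [Finset.sum_apply, Pi.single_apply, ite_apply]
  conv_rhs => rw [ha]
  simp [expectedUtility, map_sum, map_smul, mul_comm]

end AnscombeAumann

theorem extMixCancel_closedGraph_iff_multiUtilityRep_general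
    {S O : Type*} [Fintype S] [Fintype O]
    (C : Set (S → O → ℝ)) (R : (S → O → ℝ) → (S → O → ℝ) → Prop)
    (hAA : ∀ a ∈ C, IsAAAct a)
    (hclosedC : IsClosed C)
    (hmix : ∀ a ∈ C, ∀ b ∈ C, ∀ r : ℝ, 0 ≤ r → r ≤ 1 → r • a + (1 - r) • b ∈ C) :
    (ExtMixCancel C R ∧ ClosedGraphOn C R) ↔
      ∃ U : Set (S → O → ℝ), ∀ a ∈ C, ∀ b ∈ C,
        (R a b ↔ ∀ u ∈ U,
          ∑ s, ∑ o, u s o * a s o ≥ ∑ s, ∑ o, u s o * b s o) := by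
  have hC : Convex ℝ C := fun a ha b hb θ₁ θ₂ h₁ h₂ hθ => by
    obtain rfl : θ₂ = 1 - θ₁ := by linarith
    exact hmix a ha b hb θ₁ h₁ (by linarith)
  have hCc := isCompact_of_forall_isAAAct hAA hclosedC
  constructor
  · rintro ⟨hE, hG⟩
    refine ⟨{u | ∀ x ∈ C, ∀ y ∈ C, R x y → expectedUtility u y ≤ expectedUtility u x},
      fun a ha b hb => ?_⟩
    rw [hE.iff_forall_linearMap_le hG hC hCc ha hb, expectedUtility_surjective.forall]
    rfl
  · rintro ⟨U, hU⟩
    have hR : ∀ a ∈ C, ∀ b ∈ C,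
        R a b ↔ ∀ u : U, expectedUtility u.1 b ≤ expectedUtility u.1 a := fun a ha b hb => by
      rw [hU a ha b hb, Subtype.forall]
      rfl
    exact ⟨extMixCancel_of_forall_le _ hR, closedGraphOn_of_forall_le hclosedC _
      (fun u => continuous_expectedUtility _) hR⟩

/-- A relation on a closed, mixture-closed set of AA acts satisfies extended mixture
cancellation and has closed graph iff it has an additively separable multi-utility
representation. -/
theorem extMixCancel_closedGraph_iff_multiUtilityRep
    {S O : Type*} [Fintype S] [Fintype O] [Nonempty S] [Nonempty O]
    (C : Set (S → O → ℝ)) (R : (S → O → ℝ) → (S → O → ℝ) → Prop)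
    (hAA : ∀ a ∈ C, IsAAAct a)
    (hclosedC : IsClosed C)
    (hmix : ∀ a ∈ C, ∀ b ∈ C, ∀ r : ℝ, 0 ≤ r → r ≤ 1 → r • a + (1 - r) • b ∈ C) :
    (ExtMixCancel C R ∧ ClosedGraphOn C R) ↔
      ∃ U : Set (S → O → ℝ), ∀ a ∈ C, ∀ b ∈ C,
        (R a b ↔ ∀ u ∈ U,
          ∑ s, ∑ o, u s o * a s o ≥ ∑ s, ∑ o, u s o * b s o) :=
  extMixCancel_closedGraph_iff_multiUtilityRep_general C R hAA hclosedC hmix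
end

section
/- Let ⪰ be a binary relation on a closed, mixture-closed set C of Anscombe–Aumann acts satisfying extended mixture cancellation and having closed graph, and let D⁺ = {a − b : a, b ∈ C and a ⪰ b}. For any vector w ∈ ℝ^{S×O} such that w·d ≥ 0 for every d ∈ D⁺, the relation ⪰_w on C defined by a ⪰_w b iff w·(a − b) ≥ 0 is a complete binary relation on C that extends ⪰ (a ⪰ b implies a ⪰_w b), satisfies extended mixture cancellation, and has closed graph. -/
/-- `D⁺ = {a - b : a, b ∈ C and a ⪰ b}`. -/
def Dplus {V : Type*} [AddCommGroup V] (C : Set V) (R : V → V → Prop) : Set V :=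
  {x | ∃ a ∈ C, ∃ b ∈ C, R a b ∧ x = a - b}

/-- The standard inner product on `ℝ^{S×O}`. -/
def dotSO {S O : Type*} [Fintype S] [Fintype O] (w x : S → O → ℝ) : ℝ :=
  ∑ s, ∑ o, w s o * x s o
section HalfSpace

variable {V : Type*} [AddCommGroup V]

def halfSpaceRel (φ : V →+ ℝ) (a b : V) : Prop :=
  0 ≤ φ (a - b)

theorem halfSpaceRel_total (φ : V →+ ℝ) (a b : V) :
    halfSpaceRel φ a b ∨ halfSpaceRel φ b a := by
  rw [halfSpaceRel, halfSpaceRel, ← neg_sub, map_neg, neg_nonneg]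
  exact le_total _ 0

/-- The terms `φ (a i - b i)` sum to `φ (∑ a - ∑ b) = 0` and are all nonnegative, so the
repeated last one cannot be positive. -/
theorem extMixCancel_halfSpaceRel [Module ℝ V] (C : Set V) (φ : V →+ ℝ) :
    ExtMixCancel C (halfSpaceRel φ) := by
  rintro n a b - - hsum ⟨k, -, hlt, hge⟩
  by_contra! hneg
  have hlast : 0 < φ (a (Fin.last n) - b (Fin.last n)) := by
    rwa [halfSpaceRel, ← neg_sub, map_neg, neg_nonneg, not_le] at hneg
  have hterm : ∀ i, 0 ≤ φ (a i - b i) := fun i =>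
    (lt_or_ge (i : ℕ) k).elim (hlt i) fun hi => by
      rw [(hge i hi).1, (hge i hi).2]; exact hlast.le
  have hzero : ∑ i, φ (a i - b i) = 0 := by
    rw [← map_sum, Finset.sum_sub_distrib, hsum, sub_self, map_zero]
  exact (Finset.sum_pos' (fun i _ => hterm i) ⟨_, Finset.mem_univ _, hlast⟩).ne' hzero

theorem closedGraphOn_halfSpaceRel [TopologicalSpace V] [ContinuousSub V]
    {C : Set V} (hC : IsClosed C) {φ : V →+ ℝ} (hφ : Continuous φ) :
    ClosedGraphOn C (halfSpaceRel φ) := by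
  have hgraph : {p : V × V | p.1 ∈ C ∧ p.2 ∈ C ∧ halfSpaceRel φ p.1 p.2} =
      C ×ˢ C ∩ {p | 0 ≤ φ (p.1 - p.2)} := Set.ext fun _ => and_assoc.symm
  rw [ClosedGraphOn, hgraph]
  exact (hC.prod hC).inter (isClosed_le continuous_const (hφ.comp continuous_sub))

end HalfSpace

section DotSO

variable {S O : Type*} [Fintype S] [Fintype O]

def dotSOHom (w : S → O → ℝ) : (S → O → ℝ) →+ ℝ where
  toFun := dotSO w
  map_zero' := by simp [dotSO]
  map_add' x y := by simp [dotSO, mul_add, Finset.sum_add_distrib]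

theorem continuous_dotSO (w : S → O → ℝ) : Continuous (dotSO w) := by
  unfold dotSO
  fun_prop

end DotSO

theorem halfspace_relation_properties_general
    {S O : Type*} [Fintype S] [Fintype O]
    (C : Set (S → O → ℝ)) (R : (S → O → ℝ) → (S → O → ℝ) → Prop)
    (hclosedC : IsClosed C)
    (w : S → O → ℝ)
    (hw : ∀ d ∈ Dplus C R, 0 ≤ dotSO w d) :
    (∀ a ∈ C, ∀ b ∈ C, (0 ≤ dotSO w (a - b)) ∨ (0 ≤ dotSO w (b - a))) ∧
    (∀ a ∈ C, ∀ b ∈ C, R a b → 0 ≤ dotSO w (a - b)) ∧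
    ExtMixCancel C (fun a b => 0 ≤ dotSO w (a - b)) ∧
    ClosedGraphOn C (fun a b => 0 ≤ dotSO w (a - b)) :=
  ⟨fun a _ b _ => halfSpaceRel_total (dotSOHom w) a b,
    fun a ha b hb hab => hw _ ⟨a, ha, b, hb, hab, rfl⟩,
    extMixCancel_halfSpaceRel C (dotSOHom w),
    closedGraphOn_halfSpaceRel (φ := dotSOHom w) hclosedC (continuous_dotSO w)⟩

/-- For any `w` nonnegative on `D⁺`, the half-space relation `a ⪰_w b ↔ w·(a−b) ≥ 0`
is a complete extension of `⪰` satisfying extended mixture cancellation with closed graph. -/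
theorem halfspace_relation_properties
    {S O : Type*} [Fintype S] [Fintype O] [Nonempty S] [Nonempty O]
    (C : Set (S → O → ℝ)) (R : (S → O → ℝ) → (S → O → ℝ) → Prop)
    (hAA : ∀ a ∈ C, IsAAAct a)
    (hclosedC : IsClosed C)
    (hmix : ∀ a ∈ C, ∀ b ∈ C, ∀ r : ℝ, 0 ≤ r → r ≤ 1 → r • a + (1 - r) • b ∈ C)
    (hcancel : ExtMixCancel C R)
    (hgraph : ClosedGraphOn C R)
    (w : S → O → ℝ)
    (hw : ∀ d ∈ Dplus C R, 0 ≤ dotSO w d) :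
    (∀ a ∈ C, ∀ b ∈ C, (0 ≤ dotSO w (a - b)) ∨ (0 ≤ dotSO w (b - a))) ∧
    (∀ a ∈ C, ∀ b ∈ C, R a b → 0 ≤ dotSO w (a - b)) ∧
    ExtMixCancel C (fun a b => 0 ≤ dotSO w (a - b)) ∧
    ClosedGraphOn C (fun a b => 0 ≤ dotSO w (a - b)) :=
  halfspace_relation_properties_general C R hclosedC w hw
end

section
/- Let ⪰ be a binary relation on a set C of Savage acts satisfying extended statewise cancellation. Embed each act a ∈ C as the vector x_a ∈ ℝ^{S×O} with x_a(s,o) = 1 if a(s) = o and x_a(s,o) = 0 otherwise. Let D = {x_a − x_b : a, b ∈ C}, let D⁺ = {x_a − x_b : a, b ∈ C and a ⪰ b}, and let CC be the set of all finite nonnegative linear combinations of elements of D⁺. Then CC is a closed convex cone and D⁺ = CC ∩ D. -/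
/-- The embedding of a Savage act into `ℝ^{S×O}` as a 0/1 vector. -/
def embedAct {S O : Type*} [DecidableEq O] (a : S → O) : S → O → ℝ :=
  fun s o => if a s = o then 1 else 0

/-- `D = {x_a - x_b : a, b ∈ C}`. -/
def DsetE {S O : Type*} [DecidableEq O] (C : Set (S → O)) : Set (S → O → ℝ) :=
  {x | ∃ a ∈ C, ∃ b ∈ C, x = embedAct a - embedAct b}

/-- `D⁺ = {x_a - x_b : a, b ∈ C and a ⪰ b}`. -/
def DplusE {S O : Type*} [DecidableEq O] (C : Set (S → O))
    (R : (S → O) → (S → O) → Prop) : Set (S → O → ℝ) :=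
  {x | ∃ a ∈ C, ∃ b ∈ C, R a b ∧ x = embedAct a - embedAct b}

/-- `CC`: all finite nonnegative linear combinations of elements of `D⁺`. -/
def coneOfE {S O : Type*} [DecidableEq O] (C : Set (S → O))
    (R : (S → O) → (S → O) → Prop) : Set (S → O → ℝ) :=
  {x | ∃ (m : ℕ) (d : Fin (m + 1) → S → O → ℝ) (α : Fin (m + 1) → ℝ),
    (∀ i, d i ∈ DplusE C R) ∧ (∀ i, 0 ≤ α i) ∧ x = ∑ i, α i • d i}

open PointedCone

section ConicalHull

variable {V : Type*} [AddCommGroup V] [Module ℝ V]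

theorem PointedCone.mem_hull_finset {t : Finset V} {x : V} :
    x ∈ hull ℝ (t : Set V) ↔ ∃ c : V → ℝ, (∀ v ∈ t, 0 ≤ c v) ∧ ∑ v ∈ t, c v • v = x := by
  classical
  rw [Submodule.mem_span_finset]
  constructor
  · rintro ⟨f, -, rfl⟩
    exact ⟨fun v => f v, fun v _ => (f v).2, rfl⟩
  · rintro ⟨c, hc, rfl⟩
    refine ⟨fun v => if hv : v ∈ t then ⟨c v, hc v hv⟩ else 0, fun v hv => ?_, ?_⟩
    · by_contra hvt
      exact hv (dif_neg hvt)
    · exact Finset.sum_congr rfl fun v hv => by simp [hv]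

-- Move from `c` along the relation `g` until the first coefficient of `c - τ g` vanishes.
theorem PointedCone.exists_sum_mem_hull_erase [DecidableEq V] {t : Finset V} {c g : V → ℝ}
    (hc : ∀ v ∈ t, 0 ≤ c v) (hg : ∑ v ∈ t, g v • v = 0) (hpos : ∃ v ∈ t, 0 < g v) :
    ∃ v₀ ∈ t, ∑ v ∈ t, c v • v ∈ hull ℝ (t.erase v₀ : Set V) := by
  obtain ⟨v₀, hv₀, hmin⟩ := Finset.exists_min_image (t.filter fun v => 0 < g v)
    (fun v => c v / g v) (by simpa [Finset.filter_nonempty_iff] using hpos)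
  rw [Finset.mem_filter] at hv₀
  set τ := c v₀ / g v₀
  have hc' : ∀ v ∈ t, 0 ≤ c v - τ * g v := by
    intro v hv
    rcases lt_or_ge 0 (g v) with hgv | hgv
    · have := hmin v (Finset.mem_filter.mpr ⟨hv, hgv⟩)
      rw [le_div_iff₀ hgv] at this
      linarith
    · nlinarith [hc v hv, div_nonneg (hc v₀ hv₀.1) hv₀.2.le]
  have hsum : ∑ v ∈ t, c v • v = ∑ v ∈ t, (c v - τ * g v) • v := by
    simp only [sub_smul, mul_smul, Finset.sum_sub_distrib, ← Finset.smul_sum, hg, smul_zero,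
      sub_zero]
  refine ⟨v₀, hv₀.1, mem_hull_finset.mpr ⟨fun v => c v - τ * g v,
    fun v hv => hc' v (Finset.mem_of_mem_erase hv), ?_⟩⟩
  rw [hsum, ← Finset.add_sum_erase _ _ hv₀.1, div_mul_cancel₀ _ hv₀.2.ne', sub_self, zero_smul,
    zero_add]

theorem PointedCone.exists_mem_hull_erase_of_not_linearIndepOn [DecidableEq V] {t : Finset V}
    {x : V} (ht : ¬LinearIndepOn ℝ id (t : Set V)) (hx : x ∈ hull ℝ (t : Set V)) :
    ∃ v₀ ∈ t, x ∈ hull ℝ (t.erase v₀ : Set V) := by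
  obtain ⟨c, hc, rfl⟩ := mem_hull_finset.mp hx
  simp only [linearIndepOn_finset_iff, id, not_forall, exists_prop] at ht
  obtain ⟨g, hg, v, hv, hgv⟩ := ht
  rcases lt_or_gt_of_ne hgv with hneg | hpos
  · exact exists_sum_mem_hull_erase hc (g := -g) (by simp [neg_smul, hg]) ⟨v, hv, by simpa⟩
  · exact exists_sum_mem_hull_erase hc hg ⟨v, hv, hpos⟩

theorem PointedCone.exists_linearIndepOn_of_mem_hull_finset {t : Finset V} {x : V}
    (hx : x ∈ hull ℝ (t : Set V)) :
    ∃ u ⊆ t, LinearIndepOn ℝ id (u : Set V) ∧ x ∈ hull ℝ (u : Set V) := by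
  classical
  induction t using Finset.strongInduction with
  | H t ih =>
    by_cases ht : LinearIndepOn ℝ id (t : Set V)
    · exact ⟨t, subset_rfl, ht, hx⟩
    · obtain ⟨v₀, hv₀, hx'⟩ := exists_mem_hull_erase_of_not_linearIndepOn ht hx
      obtain ⟨u, hu, hli, hxu⟩ := ih _ (Finset.erase_ssubset hv₀) hx'
      exact ⟨u, hu.trans (Finset.erase_subset _ _), hli, hxu⟩

theorem PointedCone.exists_linearIndepOn_of_mem_hull {s : Set V} {x : V} (hx : x ∈ hull ℝ s) :
    ∃ u : Finset V, ↑u ⊆ s ∧ LinearIndepOn ℝ id (u : Set V) ∧ x ∈ hull ℝ (u : Set V) := by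
  obtain ⟨t, hts, hxt⟩ := Submodule.mem_span_finite_of_mem_span hx
  obtain ⟨u, hut, hu, hxu⟩ := exists_linearIndepOn_of_mem_hull_finset hxt
  exact ⟨u, (Finset.coe_subset.mpr hut).trans hts, hu, hxu⟩

variable [TopologicalSpace V] [IsTopologicalAddGroup V] [ContinuousSMul ℝ V] [T2Space V]

theorem PointedCone.isClosed_hull_of_linearIndepOn {u : Finset V}
    (hu : LinearIndepOn ℝ id (u : Set V)) : IsClosed (hull ℝ (u : Set V) : Set V) := by
  set f := Fintype.linearCombination ℝ (fun v : u => (v : V))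
  have hf : Topology.IsClosedEmbedding f :=
    LinearMap.isClosedEmbedding_of_injective
      (LinearMap.ker_eq_bot.mpr hu.fintypeLinearCombination_injective)
  have himage : (hull ℝ (u : Set V) : Set V) = f '' Set.Ici 0 := by
    ext x
    simp only [SetLike.mem_coe, mem_hull_finset, Set.mem_image, Set.mem_Ici, f,
      Fintype.linearCombination_apply]
    constructor
    · rintro ⟨c, hc, rfl⟩
      exact ⟨fun v => c v, fun v => hc v v.2, Finset.sum_coe_sort u fun v => c v • v⟩
    · rintro ⟨c, hc, rfl⟩
      classical
      refine ⟨fun v => if hv : v ∈ u then c ⟨v, hv⟩ else 0,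
        fun v hv => by simpa [hv] using hc ⟨v, hv⟩, ?_⟩
      rw [← Finset.sum_coe_sort u]
      simp
  rw [himage]
  exact hf.isClosedMap _ isClosed_Ici

theorem PointedCone.isClosed_hull_of_finite {s : Set V} (hs : s.Finite) :
    IsClosed (hull ℝ s : Set V) := by
  classical
  set 𝒰 := hs.toFinset.powerset.filter fun u : Finset V => LinearIndepOn ℝ id (u : Set V)
  have hunion :
      (hull ℝ s : Set V) = ⋃ (u : Finset V) (_ : u ∈ 𝒰), (hull ℝ (u : Set V) : Set V) := by
    apply subset_antisymm
    · intro x hx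
      rw [← hs.coe_toFinset] at hx
      obtain ⟨u, hu, hli, hxu⟩ := exists_linearIndepOn_of_mem_hull_finset hx
      exact Set.mem_biUnion (Finset.mem_filter.mpr ⟨Finset.mem_powerset.mpr hu, hli⟩) hxu
    · refine Set.iUnion₂_subset fun u hu => Submodule.span_mono ?_
      simpa using Finset.mem_powerset.mp (Finset.mem_filter.mp hu).1
  rw [hunion]
  exact isClosed_biUnion_finset fun u hu =>
    isClosed_hull_of_linearIndepOn (Finset.mem_filter.mp hu).2

end ConicalHull

theorem NNRat.exists_natCast_mul_eq_natCast {α : Type*} (t : Finset α) (q : α → ℚ≥0) :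
    ∃ N : ℕ, N ≠ 0 ∧ ∀ a ∈ t, ∃ n : ℕ, (N : ℚ≥0) * q a = n := by
  classical
  refine ⟨∏ a ∈ t, (q a).den, Finset.prod_ne_zero_iff.mpr fun a _ => (q a).den_ne_zero,
    fun a ha => ⟨(∏ b ∈ t.erase a, (q b).den) * (q a).num, ?_⟩⟩
  rw [← Finset.mul_prod_erase t _ ha]
  push_cast
  rw [← NNRat.mul_den_eq_num]
  ring

section Rational

variable {S O : Type*}

theorem coeff_mem_range_ratCast_of_linearIndepOn {t : Finset (S → O → ℝ)}
    (ht : LinearIndepOn ℝ id (t : Set (S → O → ℝ)))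
    (htℚ : ∀ v ∈ t, ∀ s o, v s o ∈ Set.range ((↑) : ℚ → ℝ)) {c : (S → O → ℝ) → ℝ}
    (hxℚ : ∀ s o, (∑ v ∈ t, c v • v) s o ∈ Set.range ((↑) : ℚ → ℝ)) :
    ∀ v ∈ t, c v ∈ Set.range ((↑) : ℚ → ℝ) := by
  -- A `ℚ`-linear retraction `φ : ℝ → ℚ`, applied to the coefficients, yields rational coefficients
  -- for the same rational point; by linear independence they agree with `c`.
  obtain ⟨φ, hφ⟩ := (Algebra.linearMap ℚ ℝ).exists_leftInverse_of_injective
    (LinearMap.ker_eq_bot.mpr (Rat.cast_injective (α := ℝ)))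
  have hφ_ratCast (q : ℚ) : φ q = q := LinearMap.congr_fun hφ q
  have hφ_mul (r w : ℝ) (hw : w ∈ Set.range ((↑) : ℚ → ℝ)) : (φ (r * w) : ℝ) = φ r * w := by
    obtain ⟨q, rfl⟩ := hw
    rw [mul_comm, ← Rat.smul_def, map_smul, smul_eq_mul, Rat.cast_mul, mul_comm]
  have hsum : ∑ v ∈ t, (c v - φ (c v)) • v = 0 := by
    ext s o
    obtain ⟨q, hq⟩ := hxℚ s o
    simp only [Finset.sum_apply, Pi.smul_apply, smul_eq_mul] at hq
    have hφq : (q : ℝ) = ∑ v ∈ t, (φ (c v) : ℝ) * v s o := by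
      rw [← hφ_ratCast q, hq, map_sum, Rat.cast_sum]
      exact Finset.sum_congr rfl fun v hv => hφ_mul _ _ (htℚ v hv s o)
    simp only [Finset.sum_apply, Pi.smul_apply, smul_eq_mul, sub_mul, Finset.sum_sub_distrib,
      Pi.zero_apply, ← hq, ← hφq, sub_self]
  intro v hv
  exact ⟨φ (c v), (sub_eq_zero.mp (linearIndepOn_finset_iff.mp ht _ hsum v hv)).symm⟩

theorem exists_nsmul_mem_closure_of_mem_hull {s : Set (S → O → ℝ)}
    (hsℚ : ∀ v ∈ s, ∀ i j, v i j ∈ Set.range ((↑) : ℚ → ℝ)) {x : S → O → ℝ}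
    (hxℚ : ∀ i j, x i j ∈ Set.range ((↑) : ℚ → ℝ)) (hx : x ∈ hull ℝ s) :
    ∃ N : ℕ, N ≠ 0 ∧ N • x ∈ AddSubmonoid.closure s := by
  obtain ⟨u, hus, hu, hxu⟩ := exists_linearIndepOn_of_mem_hull hx
  obtain ⟨c, hc, rfl⟩ := mem_hull_finset.mp hxu
  have hcℚ := coeff_mem_range_ratCast_of_linearIndepOn hu (fun v hv => hsℚ v (hus hv)) hxℚ
  have hcnonneg : ∀ v ∈ u, ∃ p : ℚ≥0, c v = p := by
    intro v hv
    obtain ⟨q, hq⟩ := hcℚ v hv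
    have hq0 : 0 ≤ q := by exact_mod_cast hq ▸ hc v hv
    exact ⟨q.toNNRat, by rw [← hq]; exact_mod_cast (Rat.coe_toNNRat q hq0).symm⟩
  choose! p hp using hcnonneg
  obtain ⟨N, hN, hn⟩ := NNRat.exists_natCast_mul_eq_natCast u p
  choose! n hn using hn
  have hNx : N • ∑ v ∈ u, c v • v = ∑ v ∈ u, n v • v := by
    rw [Finset.smul_sum]
    refine Finset.sum_congr rfl fun v hv => ?_
    rw [← Nat.cast_smul_eq_nsmul ℝ, ← Nat.cast_smul_eq_nsmul ℝ, smul_smul, hp v hv,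
      ← NNRat.cast_natCast, ← NNRat.cast_mul, hn v hv, NNRat.cast_natCast]
  refine ⟨N, hN, hNx ▸ AddSubmonoid.sum_mem _ fun v hv => ?_⟩
  exact AddSubmonoid.nsmul_mem _ (AddSubmonoid.subset_closure (hus hv)) _

end Rational

section Cancellation

variable {S O : Type*} {C : Set (S → O)} {R : (S → O) → (S → O) → Prop}

theorem ExtStatewiseCancel.rel_of_balanced_list (h : ExtStatewiseCancel C R)
    {ps : List ((S → O) × (S → O))} (hps : ∀ p ∈ ps, p.1 ∈ C ∧ p.2 ∈ C ∧ R p.1 p.2)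
    {a b : S → O} (ha : a ∈ C) (hb : b ∈ C) {N : ℕ} (hN : N ≠ 0)
    (hbal : ∀ s, (((ps ++ List.replicate N (b, a)).map fun p => p.1 s : List O) : Multiset O) =
      ((ps ++ List.replicate N (b, a)).map fun p => p.2 s : List O)) :
    R a b := by
  set L := ps ++ List.replicate N (b, a)
  have hlen : L.length = ps.length + N := by simp [L]
  obtain ⟨n, hn⟩ : ∃ n, L.length = n + 1 := Nat.exists_eq_add_one_of_ne_zero (by omega)
  set A : Fin (n + 1) → (S → O) × (S → O) := fun i => L[(i : ℕ)]'(by omega)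
  have hofFn (f : (S → O) × (S → O) → O) : List.ofFn (fun i => f (A i)) = L.map f := by
    rw [← List.ofFn_getElem_eq_map, List.ofFn_congr hn]
    rfl
  have hmem (i : Fin (n + 1)) : (A i).1 ∈ C ∧ (A i).2 ∈ C := by
    rcases List.mem_append.mp (List.getElem_mem (l := L) _) with hi | hi
    · exact ⟨(hps _ hi).1, (hps _ hi).2.1⟩
    · simp only [A, List.eq_of_mem_replicate hi]
      exact ⟨hb, ha⟩
  have htail (i : Fin (n + 1)) (hi : ps.length ≤ i) : A i = (b, a) := by
    simp only [A, L, List.getElem_append_right hi, List.getElem_replicate]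
  have hlast : A (Fin.last n) = (b, a) := htail _ (by simp only [Fin.val_last]; omega)
  have key := h n (fun i => (A i).1) (fun i => (A i).2) (fun i => (hmem i).1)
    (fun i => (hmem i).2)
    (fun s => by rw [hofFn (fun p => p.1 s), hofFn (fun p => p.2 s)]; exact hbal s)
    ⟨ps.length, by omega, fun i hi => ?_, fun i hi => by simp [htail i hi, hlast]⟩
  · simpa [hlast] using key
  · simp only [A, L, List.getElem_append_left hi]
    exact (hps _ (List.getElem_mem hi)).2.2

variable [DecidableEq O]

theorem sum_map_embedAct_apply (M : Multiset (S → O)) (s : S) (o : O) :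
    (M.map embedAct).sum s o = ((M.map fun a => a s).count o : ℝ) := by
  induction M using Multiset.induction with
  | empty => simp
  | cons a M ih =>
    by_cases h : a s = o <;> simp [embedAct, ih, h, eq_comm (a := o), add_comm]

theorem map_apply_eq_of_sum_map_embedAct_eq {M₁ M₂ : Multiset (S → O)}
    (h : (M₁.map embedAct).sum = (M₂.map embedAct).sum) (s : S) :
    M₁.map (fun a => a s) = M₂.map (fun a => a s) :=
  Multiset.ext.mpr fun o => by
    exact_mod_cast (sum_map_embedAct_apply M₁ s o).symm.trans
      ((congrFun (congrFun h s) o).trans (sum_map_embedAct_apply M₂ s o))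

theorem exists_multiset_of_mem_closure_dplusE {x : S → O → ℝ}
    (hx : x ∈ AddSubmonoid.closure (DplusE C R)) :
    ∃ P : Multiset ((S → O) × (S → O)), (∀ p ∈ P, p.1 ∈ C ∧ p.2 ∈ C ∧ R p.1 p.2) ∧
      (P.map fun p => embedAct p.1 - embedAct p.2).sum = x := by
  induction hx using AddSubmonoid.closure_induction with
  | mem x hx =>
    obtain ⟨a, ha, b, hb, hab, rfl⟩ := hx
    exact ⟨{(a, b)}, by simp [ha, hb, hab], by simp⟩
  | zero => exact ⟨0, by simp, by simp⟩
  | add x y _ _ hx hy =>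
    obtain ⟨P, hP, rfl⟩ := hx
    obtain ⟨Q, hQ, rfl⟩ := hy
    exact ⟨P + Q, fun p hp => (Multiset.mem_add.mp hp).elim (hP p) (hQ p), by simp⟩

theorem ExtStatewiseCancel.rel_of_nsmul_mem_closure (h : ExtStatewiseCancel C R)
    {a b : S → O} (ha : a ∈ C) (hb : b ∈ C) {N : ℕ} (hN : N ≠ 0)
    (hab : N • (embedAct a - embedAct b) ∈ AddSubmonoid.closure (DplusE C R)) : R a b := by
  obtain ⟨P, hP, hsum⟩ := exists_multiset_of_mem_closure_dplusE hab
  set M : Multiset ((S → O) × (S → O)) := ↑(P.toList ++ List.replicate N (b, a))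
  have hbal : ((M.map Prod.fst).map embedAct).sum = ((M.map Prod.snd).map embedAct).sum := by
    rw [← sub_eq_zero, Multiset.map_map, Multiset.map_map, ← Multiset.sum_map_sub]
    simp only [Function.comp_apply, Multiset.map_coe, List.map_append, List.map_replicate,
      Multiset.sum_coe, List.sum_append, Multiset.sum_map_toList, hsum, nsmul_eq_mul,
      List.sum_replicate, M]
    ring
  refine h.rel_of_balanced_list (fun p hp => hP p (Multiset.mem_toList.mp hp)) ha hb hN
    fun s => ?_
  simpa [M, Multiset.map_map, Function.comp_def] using map_apply_eq_of_sum_map_embedAct_eq hbal s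

end Cancellation

section SavageCone

variable {S O : Type*} [DecidableEq O]

theorem embedAct_sub_embedAct_apply_mem_range_ratCast (a b : S → O) (s : S) (o : O) :
    (embedAct a - embedAct b) s o ∈ Set.range ((↑) : ℚ → ℝ) :=
  ⟨(if a s = o then 1 else 0) - (if b s = o then 1 else 0), by
    simp only [embedAct, Pi.sub_apply]
    split_ifs <;> norm_num⟩

variable (C : Set (S → O)) (R : (S → O) → (S → O) → Prop)

theorem dplusE_finite [Finite S] [Finite O] : (DplusE C R).Finite :=
  (Set.finite_range fun p : (S → O) × (S → O) => embedAct p.1 - embedAct p.2).subset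
    fun _ ⟨a, _, b, _, _, hx⟩ => ⟨(a, b), hx.symm⟩

theorem dplusE_subset_dsetE : DplusE C R ⊆ DsetE C :=
  fun _ ⟨a, ha, b, hb, _, hx⟩ => ⟨a, ha, b, hb, hx⟩

-- Combinations in `coneOfE` have at least one term, so it is `∅` rather than `{0}` when `D⁺ = ∅`.
theorem coneOfE_eq_empty (h : DplusE C R = ∅) : coneOfE C R = ∅ :=
  Set.eq_empty_of_forall_notMem fun _ ⟨_, _, _, hd, _⟩ => (h ▸ hd 0 : _ ∈ (∅ : Set _))

theorem coneOfE_eq_hull (h : (DplusE C R).Nonempty) :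
    coneOfE C R = (hull ℝ (DplusE C R) : Set (S → O → ℝ)) := by
  ext x
  constructor
  · rintro ⟨m, d, α, hd, hα, rfl⟩
    exact Submodule.sum_mem _ fun i _ => smul_mem _ (hα i) (subset_hull (hd i))
  · intro hx
    induction hx using Submodule.span_induction with
    | mem x hx => exact ⟨0, fun _ => x, fun _ => 1, fun _ => hx, fun _ => zero_le_one, by simp⟩
    | zero =>
      obtain ⟨d, hd⟩ := h
      exact ⟨0, fun _ => d, fun _ => 0, fun _ => hd, fun _ => le_rfl, by simp⟩
    | add x y _ _ hx hy =>
      obtain ⟨m, d, α, hd, hα, rfl⟩ := hx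
      obtain ⟨m', d', α', hd', hα', rfl⟩ := hy
      have hD (i : Fin (m + 1 + (m' + 1))) : Fin.append d d' i ∈ DplusE C R :=
        Fin.addCases (by simpa using hd) (by simpa using hd') i
      have hA (i : Fin (m + 1 + (m' + 1))) : 0 ≤ Fin.append α α' i :=
        Fin.addCases (by simpa using hα) (by simpa using hα') i
      exact ⟨m + 1 + m', _, _, hD, hA,
        ((Fin.sum_univ_add (a := m + 1) (b := m' + 1) _).trans (by simp)).symm⟩
    | smul r x _ hx =>
      obtain ⟨m, d, α, hd, hα, rfl⟩ := hx
      refine ⟨m, d, fun i => r * α i, hd, fun i => mul_nonneg r.2 (hα i), ?_⟩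
      simp [Finset.smul_sum, mul_smul]

end SavageCone

theorem coneOfE_closed_convexCone_and_dplus_eq_inter_general
    {S O : Type*} [Fintype S] [Fintype O] [DecidableEq O]
    (C : Set (S → O)) (R : (S → O) → (S → O) → Prop)
    (hcancel : ExtStatewiseCancel C R) :
    IsClosed (coneOfE C R) ∧
    (∀ x ∈ coneOfE C R, ∀ y ∈ coneOfE C R, ∀ r s : ℝ, 0 ≤ r → 0 ≤ s →
      r • x + s • y ∈ coneOfE C R) ∧
    DplusE C R = coneOfE C R ∩ DsetE C := by
  rcases (DplusE C R).eq_empty_or_nonempty with hD | hD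
  · simp [coneOfE_eq_empty C R hD, hD]
  rw [coneOfE_eq_hull C R hD]
  refine ⟨isClosed_hull_of_finite (dplusE_finite C R),
    fun x hx y hy r s hr hs => add_mem (smul_mem _ hr hx) (smul_mem _ hs hy),
    subset_antisymm (fun x hx => ⟨subset_hull hx, dplusE_subset_dsetE C R hx⟩) ?_⟩
  rintro _ ⟨hx, a, ha, b, hb, rfl⟩
  have hDℚ : ∀ v ∈ DplusE C R, ∀ s o, v s o ∈ Set.range ((↑) : ℚ → ℝ) := by
    rintro _ ⟨a', -, b', -, -, rfl⟩
    exact embedAct_sub_embedAct_apply_mem_range_ratCast a' b'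
  obtain ⟨N, hN, hNx⟩ := exists_nsmul_mem_closure_of_mem_hull hDℚ
    (embedAct_sub_embedAct_apply_mem_range_ratCast a b) hx
  exact ⟨a, ha, b, hb, hcancel.rel_of_nsmul_mem_closure ha hb hN hNx, rfl⟩

/-- The cone lemma for Savage acts: `CC` is a closed convex cone and `D⁺ = CC ∩ D`. -/
theorem coneOfE_closed_convexCone_and_dplus_eq_inter
    {S O : Type*} [Fintype S] [Fintype O] [Nonempty S] [Nonempty O] [DecidableEq O]
    (C : Set (S → O)) (R : (S → O) → (S → O) → Prop)
    (hcancel : ExtStatewiseCancel C R) :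
    IsClosed (coneOfE C R) ∧
    (∀ x ∈ coneOfE C R, ∀ y ∈ coneOfE C R, ∀ r s : ℝ, 0 ≤ r → 0 ≤ s →
      r • x + s • y ∈ coneOfE C R) ∧
    DplusE C R = coneOfE C R ∩ DsetE C :=
  coneOfE_closed_convexCone_and_dplus_eq_inter_general C R hcancel
end

section
/- A binary relation ⪰ on a set C of Savage acts satisfies extended statewise cancellation if and only if it has a constructive subjective-expected-utility representation with a single utility function: there exist a finite nonempty state space S', a finite nonempty outcome space O', a map h : S' → S, a map g : S' × O → O', a function u : O' → ℝ, and a nonempty set P of probability distributions p : S' → [0,1] (with ∑_{s'∈S'} p(s') = 1) such that for all a, b ∈ C: a ⪰ b if and only if for every p ∈ P, ∑_{s'∈S'} p(s')·u(g(s', a(h(s')))) ≥ ∑_{s'∈S'} p(s')·u(g(s', b(h(s')))). Moreover, if ⪰ is in addition complete (for all a, b ∈ C, a ⪰ b or b ⪰ a), then P can be chosen to be a singleton. -/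
/-!
Soundness: statewise equality of the multisets makes the interpreted utility vectors of the two
sequences sum to the same vector, so under every prior the expected utilities have equal sums;
the weak inequalities on the first `k` terms then force the reverse one on the constant tail.

Completeness: let the subjective states be the pairs `(s, o)`, with utility `1` exactly when the
act yields `o` at `s`, so that an act is represented by the indicator vector `χ a` of its graph,
and let `P` be the set of all priors consistent with `R`. If every prior in `P` ranks `a` above
`b`, Farkas' lemma over `ℚ` either writes `χ a - χ b` as a nonnegative rational, hence after
scaling natural, combination of vectors `χ c - χ d` with `R c d`, which is an instance of extended
statewise cancellation, or yields a separating functional. All graph indicators have the same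
coordinate sum, so that functional can be shifted and normalised into a prior in `P` ranking `b`
strictly above `a`. For a complete relation, averaging finitely many priors witnessing the
strict rankings gives a single prior.
-/

open Set

theorem last_le_last_of_sum_eq {M : Type*} [AddCommMonoid M] [LinearOrder M]
    [IsOrderedCancelAddMonoid M] {n k : ℕ} {x y : Fin (n + 1) → M}
    (hsum : ∑ i, x i = ∑ i, y i) (hlt : ∀ i : Fin (n + 1), (i : ℕ) < k → y i ≤ x i)
    (hge : ∀ i : Fin (n + 1), k ≤ i → x i = x (Fin.last n) ∧ y i = y (Fin.last n)) :
    x (Fin.last n) ≤ y (Fin.last n) := by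
  by_contra! hlast
  refine (Finset.sum_lt_sum (fun i _ => ?_) ⟨Fin.last n, Finset.mem_univ _, hlast⟩).ne' hsum
  rcases lt_or_ge (i : ℕ) k with hi | hi
  · exact hlt i hi
  · rw [(hge i hi).1, (hge i hi).2]; exact hlast.le

section Field

variable {K ι : Type*} [Field K] [Fintype ι]

def projAlong (y d : ι → K) : (ι → K) →ₗ[K] ι → K :=
  LinearMap.id - ((y ⬝ᵥ d)⁻¹ • dotProductBilin K K y).smulRight d

theorem projAlong_apply (y d w : ι → K) :
    projAlong y d w = w - (y ⬝ᵥ w / y ⬝ᵥ d) • d := by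
  simp [projAlong, div_eq_inv_mul, dotProductBilin]

theorem dotProduct_projAlong (y d z w : ι → K) :
    z ⬝ᵥ projAlong y d w = (z - (z ⬝ᵥ d / y ⬝ᵥ d) • y) ⬝ᵥ w := by
  simp only [projAlong_apply, dotProduct_sub, sub_dotProduct, dotProduct_smul, smul_dotProduct,
    smul_eq_mul, dotProduct_comm y w]
  ring

theorem projAlong_self {y d : ι → K} (h : y ⬝ᵥ d ≠ 0) : projAlong y d d = 0 := by
  rw [projAlong_apply, div_self h, one_smul, sub_self]

variable [LinearOrder K] [IsStrictOrderedRing K]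

theorem dotProduct_nonneg_of_mem_hull {s : Set (ι → K)} {y v : ι → K}
    (hs : ∀ e ∈ s, 0 ≤ y ⬝ᵥ e) (hv : v ∈ PointedCone.hull K s) : 0 ≤ y ⬝ᵥ v := by
  induction hv using Submodule.span_induction with
  | mem x hx => exact hs x hx
  | zero => simp
  | add x z _ _ hx hz => rw [dotProduct_add]; exact add_nonneg hx hz
  | smul c x _ hx => rw [← Nonneg.coe_smul, dotProduct_smul, smul_eq_mul]; exact mul_nonneg c.2 hx

theorem mem_hull_insert_of_projAlong_mem_hull {s : Set (ι → K)} {y d v : ι → K}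
    (hyd : y ⬝ᵥ d < 0) (hys : ∀ e ∈ s, 0 ≤ y ⬝ᵥ e) (hyv : y ⬝ᵥ v ≤ 0)
    (hv : projAlong y d v ∈ PointedCone.hull K (projAlong y d '' s)) :
    v ∈ PointedCone.hull K (insert d s) := by
  have hmap := Submodule.span_image (s := s) ((projAlong y d).restrictScalars {c : K // 0 ≤ c})
  rw [LinearMap.coe_restrictScalars] at hmap
  obtain ⟨w, hw, hπw⟩ : ∃ w ∈ PointedCone.hull K s, projAlong y d w = projAlong y d v :=
    Submodule.mem_map.1 (by rw [← hmap]; exact hv)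
  have hvw : v - w = (y ⬝ᵥ (v - w) / y ⬝ᵥ d) • d := by
    rw [← sub_eq_zero, ← projAlong_apply, map_sub, hπw, sub_self]
  have hμ : 0 ≤ y ⬝ᵥ (v - w) / y ⬝ᵥ d := by
    refine div_nonneg_of_nonpos ?_ hyd.le
    rw [dotProduct_sub, sub_nonpos]
    exact hyv.trans (dotProduct_nonneg_of_mem_hull hys hw)
  rw [Submodule.mem_span_insert]
  exact ⟨⟨_, hμ⟩, w, hw, by rw [← Nonneg.coe_smul, ← hvw, sub_add_cancel]⟩

theorem mem_hull_range_or_exists_dotProduct_neg {J : Type*} [Finite J] (E : J → ι → K)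
    (v : ι → K) :
    v ∈ PointedCone.hull K (range E) ∨ ∃ y : ι → K, (∀ j, 0 ≤ y ⬝ᵥ E j) ∧ y ⬝ᵥ v < 0 := by
  induction J using Finite.induction_empty_option generalizing v with
  | of_equiv e ih =>
    rcases ih (E ∘ e) v with hv | ⟨y, hy, hyv⟩
    · left; rwa [range_comp, e.range_eq_univ, image_univ] at hv
    · exact Or.inr ⟨y, e.forall_congr_right.1 hy, hyv⟩
  | h_empty =>
    by_cases hv : v = 0
    · exact Or.inl (hv ▸ zero_mem _)
    · refine Or.inr ⟨-v, fun j => j.elim, ?_⟩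
      rw [neg_dotProduct, neg_neg_iff_pos]
      exact lt_of_le_of_ne (Finset.sum_nonneg fun i _ => mul_self_nonneg (v i))
        (Ne.symm (dotProduct_self_eq_zero.not.2 hv))
  | @h_option J _ ih =>
    rw [Option.range_eq]
    rcases ih (E ∘ some) v with hv | ⟨y, hy, hyv⟩
    · exact Or.inl (Submodule.span_mono (subset_insert _ _) hv)
    rcases le_or_gt 0 (y ⬝ᵥ E none) with hyd | hyd
    · exact Or.inr ⟨y, fun j => j.rec hyd hy, hyv⟩
    -- Fourier–Motzkin: eliminate `E none` by projecting along it onto the kernel of `y`.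
    let π := projAlong y (E none)
    rcases ih (π ∘ E ∘ some) (π v) with hπv | ⟨z, hz, hzv⟩
    · rw [range_comp] at hπv
      exact Or.inl (mem_hull_insert_of_projAlong_mem_hull hyd (forall_mem_range.2 hy) hyv.le hπv)
    · refine Or.inr ⟨z - (z ⬝ᵥ E none / y ⬝ᵥ E none) • y, fun j => ?_, ?_⟩
      · cases j with
        | none => rw [← dotProduct_projAlong, projAlong_self hyd.ne, dotProduct_zero]
        | some j => rw [← dotProduct_projAlong]; exact hz j
      · rwa [← dotProduct_projAlong]

theorem exists_mem_stdSimplex_dotProduct_eq_mul [Nonempty ι] (y : ι → K) :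
    ∃ p ∈ stdSimplex K ι, ∃ c : K, 0 < c ∧ ∀ z : ι → K, ∑ i, z i = 0 → p ⬝ᵥ z = c * y ⬝ᵥ z := by
  set m := ∑ i, |y i| + 1
  have hw : ∀ i, 0 < y i + m := fun i => by
    have := Finset.single_le_sum (fun j _ => abs_nonneg (y j)) (Finset.mem_univ i)
    linarith [neg_abs_le (y i)]
  set T := ∑ i, (y i + m)
  have hT : 0 < T := Finset.sum_pos (fun i _ => hw i) Finset.univ_nonempty
  refine ⟨fun i => T⁻¹ * (y i + m), ⟨fun i => (mul_pos (inv_pos.2 hT) (hw i)).le, ?_⟩, T⁻¹,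
    inv_pos.2 hT, fun z hz => ?_⟩
  · rw [← Finset.mul_sum, inv_mul_cancel₀ hT.ne']
  · simp only [dotProduct, mul_assoc, add_mul, ← Finset.mul_sum, Finset.sum_add_distrib]
    rw [hz, mul_zero, add_zero]

end Field

theorem exists_nsmul_mem_closure_of_mem_hull_s14 {M : Type*} [AddCommGroup M] [Module ℚ M]
    {s : Set M} {v : M} (hv : v ∈ PointedCone.hull ℚ s) :
    ∃ N : ℕ, 0 < N ∧ N • v ∈ AddSubmonoid.closure s := by
  induction hv using Submodule.span_induction with
  | mem x hx => exact ⟨1, one_pos, by simpa using AddSubmonoid.subset_closure hx⟩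
  | zero => exact ⟨1, one_pos, by simp⟩
  | add x z _ _ hx hz =>
    obtain ⟨N₁, hN₁, hx⟩ := hx
    obtain ⟨N₂, hN₂, hz⟩ := hz
    refine ⟨N₁ * N₂, Nat.mul_pos hN₁ hN₂, ?_⟩
    rw [smul_add, mul_comm, mul_smul, mul_comm, mul_smul]
    exact add_mem (nsmul_mem hx _) (nsmul_mem hz _)
  | smul c x _ hx =>
    obtain ⟨N, hN, hx⟩ := hx
    obtain ⟨c, hc⟩ := c
    lift c to ℚ≥0 using hc
    refine ⟨c.den * N, Nat.mul_pos c.den_pos hN, ?_⟩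
    have hc : (c.den : ℚ) * c = c.num := by exact_mod_cast c.den_mul_eq_num
    have : (c.den * N) • ((⟨c, c.2⟩ : {c : ℚ // 0 ≤ c}) • x) = c.num • N • x := by
      simp only [← Nat.cast_smul_eq_nsmul ℚ, ← Nonneg.coe_smul, smul_smul]
      rw [Nat.cast_mul, mul_right_comm, hc]
    exact this ▸ nsmul_mem hx _

def IsSEURep {α ι : Type*} [Fintype ι] (C : Set α) (R : α → α → Prop) (U : α → ι → ℝ)
    (P : Set (ι → ℝ)) : Prop :=
  ∀ a ∈ C, ∀ b ∈ C, (R a b ↔ ∀ p ∈ P, p ⬝ᵥ U a ≥ p ⬝ᵥ U b)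

theorem IsSEURep.exists_singleton_of_total {α ι : Type*} [Finite α] [Fintype ι] {C : Set α}
    {R : α → α → Prop} {U : α → ι → ℝ} {P : Set (ι → ℝ)} (hrep : IsSEURep C R U P)
    (hP : P.Nonempty) (hPs : P ⊆ stdSimplex ℝ ι) (htot : ∀ a ∈ C, ∀ b ∈ C, R a b ∨ R b a) :
    ∃ p ∈ stdSimplex ℝ ι, ∀ a ∈ C, ∀ b ∈ C, (R a b ↔ p ⬝ᵥ U a ≥ p ⬝ᵥ U b) := by
  have := Fintype.ofFinite α
  obtain ⟨p₀, hp₀⟩ := hP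
  have hsep : ∀ t : α × α, ∃ p ∈ P,
      t.1 ∈ C → t.2 ∈ C → ¬R t.1 t.2 → p ⬝ᵥ U t.1 < p ⬝ᵥ U t.2 := by
    rintro ⟨a, b⟩
    by_cases hab : a ∈ C ∧ b ∈ C ∧ ¬R a b
    · obtain ⟨ha, hb, hab⟩ := hab
      simp only [hrep a ha b hb, not_forall, not_le, exists_prop] at hab
      obtain ⟨p, hp, hlt⟩ := hab
      exact ⟨p, hp, fun _ _ _ => hlt⟩
    · exact ⟨p₀, hp₀, fun ha hb hab' => absurd ⟨ha, hb, hab'⟩ hab⟩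
  choose q hqP hq using hsep
  -- `p₀` is included so that the average below is a prior even when `α` is empty.
  let Q : Option (α × α) → ι → ℝ := fun o => o.elim p₀ q
  have hQP : ∀ o, Q o ∈ P := fun o => o.rec hp₀ hqP
  set w : ℝ := (Fintype.card (Option (α × α)) : ℝ)⁻¹
  have hw : 0 < w := by positivity
  have hval : ∀ f, (∑ o, w • Q o) ⬝ᵥ U f = w * ∑ o, Q o ⬝ᵥ U f := fun f => by
    simp only [sum_dotProduct, smul_dotProduct, smul_eq_mul, Finset.mul_sum]
  refine ⟨∑ o, w • Q o, (convex_stdSimplex ℝ ι).sum_mem (fun _ _ => hw.le) ?_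
    (fun o _ => hPs (hQP o)), fun a ha b hb => ?_⟩
  · rw [Finset.sum_const, Finset.card_univ, nsmul_eq_mul, mul_inv_cancel₀ (by positivity)]
  rw [hval, hval, ge_iff_le, mul_le_mul_iff_right₀ hw]
  refine ⟨fun hab => Finset.sum_le_sum fun o _ => (hrep a ha b hb).1 hab _ (hQP o),
    fun hle => by_contra fun hab => hle.not_gt ?_⟩
  have hba := (htot a ha b hb).resolve_left hab
  exact Finset.sum_lt_sum (fun o _ => (hrep b hb a ha).1 hba _ (hQP o))
    ⟨some (a, b), Finset.mem_univ _, hq (a, b) ha hb hab⟩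

section Acts

variable {S O : Type*}

def graphIndicator {K : Type*} [DecidableEq O] [Zero K] [One K] (f : S → O) : S × O → K :=
  fun x => if f x.1 = x.2 then 1 else 0

@[simp]
theorem Rat.cast_graphIndicator {K : Type*} [DivisionRing K] [DecidableEq O]
    (f : S → O) (x : S × O) : ((graphIndicator f x : ℚ) : K) = graphIndicator f x := by
  simp [graphIndicator, apply_ite]

theorem sum_graphIndicator_sub {K : Type*} [Ring K] [Fintype S] [Fintype O] [DecidableEq O]
    (f g : S → O) : ∑ x, (graphIndicator f - graphIndicator g : S × O → K) x = 0 := by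
  simp only [Pi.sub_apply, Fintype.sum_prod_type, graphIndicator]
  simp

theorem count_map_apply_eq_sum_graphIndicator {K : Type*} [AddMonoidWithOne K] [DecidableEq O]
    (L : List (S → O)) (s : S) (o : O) :
    ((L.map (· s)).count o : K) = (L.map graphIndicator).sum (s, o) := by
  induction L with
  | nil => simp
  | cons f L ih => simp [List.count_cons, ih, graphIndicator, add_comm]

variable {C : Set (S → O)} {R : (S → O) → (S → O) → Prop}

theorem IsSEURep.extStatewiseCancel {S' : Type*} [Fintype S'] {h : S' → S} {φ : S' → O → ℝ}
    {P : Set (S' → ℝ)} (hrep : IsSEURep C R (fun a s' => φ s' (a (h s'))) P) :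
    ExtStatewiseCancel C R := by
  rintro n a b ha hb hms ⟨k, -, hlt, hge⟩
  rw [hrep _ (hb _) _ (ha _)]
  intro p hp
  have hU : ∑ i, (fun s' => φ s' (a i (h s'))) = ∑ i, fun s' => φ s' (b i (h s')) := by
    ext s'
    have := congrArg (fun m : Multiset O => (m.map (φ s')).sum) (hms (h s'))
    simpa only [Multiset.map_coe, Multiset.sum_coe, List.map_ofFn, List.sum_ofFn,
      Finset.sum_apply, Function.comp_apply] using this
  refine last_le_last_of_sum_eq (k := k) (x := fun i => p ⬝ᵥ fun s' => φ s' (a i (h s')))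
    (y := fun i => p ⬝ᵥ fun s' => φ s' (b i (h s'))) ?_
    (fun i hi => (hrep _ (ha i) _ (hb i)).1 (hlt i hi) p hp)
    (fun i hi => by simp only [(hge i hi).1, (hge i hi).2, and_self])
  simp only [← dotProduct_sum, hU]

namespace ExtStatewiseCancel

theorem rel_of_list (hC : ExtStatewiseCancel C R) {a b : S → O} (ha : a ∈ C) (hb : b ∈ C)
    (L : List ((S → O) × (S → O))) (hL : ∀ t ∈ L, t.1 ∈ C ∧ t.2 ∈ C ∧ R t.1 t.2)
    {N : ℕ} (hN : 0 < N)
    (hms : ∀ s, (((L ++ .replicate N (b, a)).map (·.1 s) : List O) : Multiset O)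
      = ((L ++ .replicate N (b, a)).map (·.2 s) : List O)) :
    R a b := by
  set L' := L ++ .replicate N (b, a)
  obtain ⟨n, hn⟩ : ∃ n, L'.length = n + 1 := ⟨L.length + N - 1, by simp [L']; omega⟩
  have hk : L.length ≤ n := by simp [L'] at hn; omega
  let t : Fin (n + 1) → (S → O) × (S → O) := fun i => L'[(i : ℕ)]'(by rw [hn]; exact i.2)
  have hmem : ∀ x ∈ L', x.1 ∈ C ∧ x.2 ∈ C := by
    intro x hx
    rcases List.mem_append.1 hx with h | h
    · exact ⟨(hL _ h).1, (hL _ h).2.1⟩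
    · rw [List.eq_of_mem_replicate h]; exact ⟨hb, ha⟩
  have ht_mem : ∀ i, (t i).1 ∈ C ∧ (t i).2 ∈ C := fun i => hmem _ (List.getElem_mem _)
  have ht_head : ∀ i : Fin (n + 1), (i : ℕ) < L.length → R (t i).1 (t i).2 := fun i hi => by
    rw [show t i = L[(i : ℕ)] from List.getElem_append_left hi]
    exact (hL _ (List.getElem_mem hi)).2.2
  have ht_tail : ∀ i : Fin (n + 1), L.length ≤ i → t i = (b, a) := fun i hi => by
    simp only [t, L']
    rw [List.getElem_append_right hi, List.getElem_replicate]
  have hlast : t (Fin.last n) = (b, a) := ht_tail _ (by simpa using hk)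
  have hofFn : ∀ f : (S → O) × (S → O) → O, List.ofFn (fun i => f (t i)) = L'.map f := fun f =>
    List.ext_getElem (by simp [hn]) fun i _ _ => by
      simp only [List.getElem_ofFn, List.getElem_map, t]
  have := hC n (fun i => (t i).1) (fun i => (t i).2) (fun i => (ht_mem i).1)
    (fun i => (ht_mem i).2) (fun s => by rw [hofFn (·.1 s), hofFn (·.2 s)]; exact hms s)
    ⟨L.length, hk, ht_head, fun i hi => by simp [ht_tail i hi, hlast]⟩
  simpa [hlast] using this

theorem rel_of_sum_eq_nsmul [DecidableEq O] (hC : ExtStatewiseCancel C R) {a b : S → O}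
    (ha : a ∈ C) (hb : b ∈ C)
    (L : List ((S → O) × (S → O))) (hL : ∀ t ∈ L, t.1 ∈ C ∧ t.2 ∈ C ∧ R t.1 t.2)
    {N : ℕ} (hN : 0 < N)
    (hsum : (L.map fun t => (graphIndicator t.1 - graphIndicator t.2 : S × O → ℚ)).sum
      = N • (graphIndicator a - graphIndicator b)) :
    R a b := by
  refine hC.rel_of_list ha hb L hL hN fun s => Multiset.ext.2 fun o => ?_
  have hcount : ∀ (M : List ((S → O) × (S → O))) (p : (S → O) × (S → O) → S → O),
      ((M.map (fun t => p t s)).count o : ℚ) = ((M.map p).map graphIndicator).sum (s, o) := by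
    intro M p
    rw [← count_map_apply_eq_sum_graphIndicator, List.map_map]; rfl
  rw [Multiset.coe_count, Multiset.coe_count, ← Nat.cast_inj (R := ℚ), hcount _ Prod.fst,
    hcount _ Prod.snd]
  refine congrFun ?_ (s, o)
  have := Multiset.sum_map_sub (m := (L : Multiset ((S → O) × (S → O))))
    (f := fun t => (graphIndicator t.1 : S × O → ℚ)) (g := fun t => graphIndicator t.2)
  simp only [Multiset.map_coe, Multiset.sum_coe] at this
  rw [this, smul_sub, sub_eq_sub_iff_add_eq_add] at hsum
  simp only [List.map_append, List.sum_append, List.map_replicate, List.sum_replicate,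
    List.map_map, Function.comp_def]
  rw [hsum, add_comm]

theorem exists_dotProduct_neg [Fintype S] [Fintype O] [DecidableEq O]
    (hC : ExtStatewiseCancel C R) {a b : S → O} (ha : a ∈ C) (hb : b ∈ C) (hab : ¬R a b) :
    ∃ y : S × O → ℚ,
      (∀ c ∈ C, ∀ d ∈ C, R c d → 0 ≤ y ⬝ᵥ (graphIndicator c - graphIndicator d)) ∧
      y ⬝ᵥ (graphIndicator a - graphIndicator b) < 0 := by
  let E : {t : (S → O) × (S → O) // t.1 ∈ C ∧ t.2 ∈ C ∧ R t.1 t.2} → S × O → ℚ :=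
    fun t => graphIndicator t.1.1 - graphIndicator t.1.2
  rcases mem_hull_range_or_exists_dotProduct_neg E (graphIndicator a - graphIndicator b) with
    hv | ⟨y, hy, hyab⟩
  · obtain ⟨N, hN, hNv⟩ := exists_nsmul_mem_closure_of_mem_hull_s14 hv
    obtain ⟨l, hl, hsum⟩ := AddSubmonoid.exists_list_of_mem_closure hNv
    obtain ⟨l, rfl⟩ : l ∈ range (List.map E) := by rwa [range_list_map]
    refine absurd (hC.rel_of_sum_eq_nsmul ha hb (l.map Subtype.val) ?_ hN ?_) hab
    · simp only [List.mem_map]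
      rintro _ ⟨t, -, rfl⟩
      exact t.2
    · rwa [List.map_map]
  · exact ⟨y, fun c hc d hd hcd => hy ⟨(c, d), hc, hd, hcd⟩, hyab⟩

theorem exists_isSEURep_graphIndicator [Fintype S] [Fintype O] [Nonempty S] [Nonempty O]
    [DecidableEq O] (hC : ExtStatewiseCancel C R) :
    ∃ P ⊆ stdSimplex ℝ (S × O), P.Nonempty ∧ IsSEURep C R graphIndicator P := by
  let P := {p ∈ stdSimplex ℝ (S × O) |
    ∀ c ∈ C, ∀ d ∈ C, R c d → p ⬝ᵥ graphIndicator c ≥ p ⬝ᵥ graphIndicator d}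
  refine ⟨P, fun p hp => hp.1, ?_, fun a ha b hb => ⟨fun hab p hp => hp.2 a ha b hb hab,
    fun hall => by_contra fun hab => ?_⟩⟩
  · obtain ⟨p, hp, _, -, hpz⟩ := exists_mem_stdSimplex_dotProduct_eq_mul (0 : S × O → ℝ)
    refine ⟨p, hp, fun c _ d _ _ => ?_⟩
    have := hpz _ (sum_graphIndicator_sub c d)
    rw [zero_dotProduct, mul_zero, dotProduct_sub, sub_eq_zero] at this
    exact this.ge
  obtain ⟨y, hy, hyab⟩ := hC.exists_dotProduct_neg ha hb hab
  obtain ⟨p, hp, c, hc, hpz⟩ :=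
    exists_mem_stdSimplex_dotProduct_eq_mul (Rat.cast ∘ y : S × O → ℝ)
  have key : ∀ f g : S → O, p ⬝ᵥ graphIndicator f - p ⬝ᵥ graphIndicator g
      = c * ((y ⬝ᵥ (graphIndicator f - graphIndicator g) : ℚ) : ℝ) := by
    intro f g
    rw [← dotProduct_sub, hpz _ (sum_graphIndicator_sub f g)]
    simp only [dotProduct, Function.comp_apply, Pi.sub_apply, Rat.cast_sum, Rat.cast_mul,
      Rat.cast_sub, Rat.cast_graphIndicator]
  have hpP : p ∈ P := ⟨hp, fun c' hc' d hd hcd => sub_nonneg.1 <| by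
    rw [key]; exact mul_nonneg hc.le (by exact_mod_cast hy c' hc' d hd hcd)⟩
  have hlt : p ⬝ᵥ graphIndicator a - p ⬝ᵥ graphIndicator b < 0 := by
    rw [key]; exact mul_neg_of_pos_of_neg hc (by exact_mod_cast hyab)
  exact (sub_nonneg.2 (hall p hpP)).not_gt hlt

theorem exists_fin_isSEURep [Fintype S] [Fintype O] [Nonempty S] [Nonempty O]
    (hC : ExtStatewiseCancel C R) :
    ∃ (ns : ℕ) (h : Fin (ns + 1) → S) (g : Fin (ns + 1) × O → Fin 2)
      (P : Set (Fin (ns + 1) → ℝ)), P.Nonempty ∧ P ⊆ stdSimplex ℝ (Fin (ns + 1)) ∧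
        IsSEURep C R (fun a s' => ((g (s', a (h s')) : ℕ) : ℝ)) P := by
  classical
  obtain ⟨P, hPs, hP, hrep⟩ := hC.exists_isSEURep_graphIndicator
  let e : Fin (Fintype.card (S × O) - 1 + 1) ≃ S × O :=
    (finCongr (Nat.sub_add_cancel Fintype.card_pos)).trans (Fintype.equivFin _).symm
  refine ⟨_, fun s' => (e s').1, fun x => if x.2 = (e x.1).2 then 1 else 0, (· ∘ e) '' P,
    hP.image _, ?_, fun a ha b hb => ?_⟩
  · rintro _ ⟨p, hp, rfl⟩
    exact ⟨fun _ => (hPs hp).1 _, (e.sum_comp p).trans (hPs hp).2⟩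
  have hU : ∀ f : S → O,
      (fun s' => (((if f (e s').1 = (e s').2 then 1 else 0 : Fin 2) : ℕ) : ℝ))
        = graphIndicator f ∘ e := by
    intro f; ext s'; by_cases hf : f (e s').1 = (e s').2 <;> simp [hf, graphIndicator]
  simp only [hU, forall_mem_image, comp_equiv_dotProduct_comp_equiv]
  exact hrep a ha b hb

end ExtStatewiseCancel

end Acts

/-- A relation on a set of Savage acts satisfies extended statewise cancellation iff it
has a constructive SEU representation over some finite nonempty subjective state space
`Fin (ns+1)` and outcome space `Fin (no+1)`, with a single utility function and a
nonempty set of probability distributions; if the relation is moreover complete, the set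
of probabilities can be chosen to be a singleton. -/
theorem extStatewiseCancel_iff_constructiveSEURep
    {S O : Type*} [Fintype S] [Fintype O] [Nonempty S] [Nonempty O]
    (C : Set (S → O)) (R : (S → O) → (S → O) → Prop) :
    (ExtStatewiseCancel C R ↔
      ∃ (ns no : ℕ) (h : Fin (ns + 1) → S) (g : Fin (ns + 1) × O → Fin (no + 1))
        (u : Fin (no + 1) → ℝ) (P : Set (Fin (ns + 1) → ℝ)),
        P.Nonempty ∧
        (∀ p ∈ P, (∀ s', 0 ≤ p s') ∧ (∑ s', p s' = 1)) ∧
        (∀ a ∈ C, ∀ b ∈ C,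
          (R a b ↔ ∀ p ∈ P,
            ∑ s', p s' * u (g (s', a (h s'))) ≥ ∑ s', p s' * u (g (s', b (h s')))))) ∧
    ((ExtStatewiseCancel C R ∧ (∀ a ∈ C, ∀ b ∈ C, R a b ∨ R b a)) →
      ∃ (ns no : ℕ) (h : Fin (ns + 1) → S) (g : Fin (ns + 1) × O → Fin (no + 1))
        (u : Fin (no + 1) → ℝ) (p : Fin (ns + 1) → ℝ),
        (∀ s', 0 ≤ p s') ∧ (∑ s', p s' = 1) ∧
        (∀ a ∈ C, ∀ b ∈ C,
          (R a b ↔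
            ∑ s', p s' * u (g (s', a (h s'))) ≥ ∑ s', p s' * u (g (s', b (h s')))))) := by
  refine ⟨⟨fun hC => ?_, ?_⟩, fun ⟨hC, htot⟩ => ?_⟩
  · obtain ⟨ns, h, g, P, hP, hPs, hrep⟩ := hC.exists_fin_isSEURep
    exact ⟨ns, 1, h, g, fun i => ((i : ℕ) : ℝ), P, hP, hPs, hrep⟩
  · rintro ⟨ns, no, h, g, u, P, -, -, hrep⟩
    exact IsSEURep.extStatewiseCancel (φ := fun s' o => u (g (s', o))) hrep
  · obtain ⟨ns, h, g, P, hP, hPs, hrep⟩ := hC.exists_fin_isSEURep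
    obtain ⟨p, hp, hrep₁⟩ := hrep.exists_singleton_of_total hP hPs htot
    exact ⟨ns, 1, h, g, fun i => ((i : ℕ) : ℝ), p, hp.1, hp.2, hrep₁⟩
end
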